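/- arXiv:2310.00435 — 12 statements merged into one kernel-verified Lean document; each statement's English description precedes it below -/
import Mathlib

section
/- Let Z be a nonempty set and let ≻ be a binary relation on the set of lotteries over Z satisfying the VNM axioms. Then there exists a utility function u : Z → ℝ such that for all lotteries p and q over Z, p ≻ q if and only if E_p[u] > E_q[u]. -/
open scoped BigOperators

/-- A lottery over `Z`: a finitely supported nonnegative function summing to one. -/
structure Lottery (Z : Type*) where
  w : Z →₀ ℝ
  nonneg : ∀ z, 0 ≤ w z
  total : w.sum (fun _ x => x) = 1

/-- The mixture `α·p + (1-α)·q` of two lotteries (defined to be `p` if `α ∉ [0,1]`). -/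
noncomputable def Lottery.mix {Z : Type*} (α : ℝ) (p q : Lottery Z) : Lottery Z :=
  if h : 0 ≤ α ∧ α ≤ 1 then
    { w := α • p.w + (1 - α) • q.w
      nonneg := by
        intro z
        have hp := p.nonneg z
        have hq := q.nonneg z
        have h1 : (0:ℝ) ≤ 1 - α := by linarith [h.2]
        rw [Finsupp.add_apply, Finsupp.smul_apply, Finsupp.smul_apply,
          smul_eq_mul, smul_eq_mul]
        nlinarith [h.1]
      total := by
        rw [Finsupp.sum_add_index' (fun _ => rfl) (fun _ _ _ => rfl)]
        rw [Finsupp.sum_smul_index (fun _ => rfl), Finsupp.sum_smul_index (fun _ => rfl)]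
        rw [← Finsupp.mul_sum, ← Finsupp.mul_sum, p.total, q.total]
        ring }
  else p

/-- Expected utility of a lottery `p` with respect to utility `u`. -/
noncomputable def EU {Z : Type*} (u : Z → ℝ) (p : Lottery Z) : ℝ :=
  p.w.sum fun z x => x * u z

/-- The von Neumann–Morgenstern axioms for a strict preference relation on lotteries. -/
def VNM {Z : Type*} (pr : Lottery Z → Lottery Z → Prop) : Prop :=
  -- Asymmetry
  (∀ p q, pr p q → ¬ pr q p) ∧
  -- Negative transitivity
  (∀ p q r, ¬ pr p q → ¬ pr q r → ¬ pr p r) ∧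
  -- Independence
  (∀ p q r, pr p q → ∀ α : ℝ, 0 < α → α ≤ 1 →
      pr (Lottery.mix α p r) (Lottery.mix α q r)) ∧
  -- Continuity
  (∀ p q r, pr p q → pr q r →
      ∃ α β : ℝ, 0 < α ∧ α < 1 ∧ 0 < β ∧ β < 1 ∧
        pr (Lottery.mix α p r) q ∧ pr q (Lottery.mix β p r))

/-!
The crux is that independence also holds for weak preference: `¬ p ≻ q` implies
`¬ α•p + (1-α)•r ≻ α•q + (1-α)•r`. Granted this, for `B ≻ W` every `x` weakly between them is
indifferent to exactly one mixture `t•B + (1-t)•W`, and `t` is an affine, order-representing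
function of `x`. Calibrations on nested intervals differ by an increasing affine map, so after
normalizing at a fixed pair `p₀ ≻ q₀` they glue to one affine representation `U` of `≻` on all
lotteries, and affinity gives `U p = E_p[z ↦ U δ_z]`. If there is no such pair, `≻` is empty
and `u = 0` works.
-/

namespace Lottery

variable {Z : Type*}

theorem ext {p q : Lottery Z} (h : ∀ z, p.w z = q.w z) : p = q := by
  cases p; cases q; congr; exact Finsupp.ext h

theorem mix_w_apply {α : ℝ} (h0 : 0 ≤ α) (h1 : α ≤ 1) (p q : Lottery Z) (z : Z) :
    (mix α p q).w z = α * p.w z + (1 - α) * q.w z := by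
  simp [mix, dif_pos (And.intro h0 h1)]

@[simp] theorem mix_one (p q : Lottery Z) : mix 1 p q = p :=
  ext fun z => by rw [mix_w_apply zero_le_one le_rfl]; ring

@[simp] theorem mix_zero (p q : Lottery Z) : mix 0 p q = q :=
  ext fun z => by rw [mix_w_apply le_rfl zero_le_one]; ring

theorem mix_self {α : ℝ} (h0 : 0 ≤ α) (h1 : α ≤ 1) (p : Lottery Z) : mix α p p = p :=
  ext fun z => by rw [mix_w_apply h0 h1]; ring

theorem mix_comm {α : ℝ} (h0 : 0 ≤ α) (h1 : α ≤ 1) (p q : Lottery Z) :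
    mix α p q = mix (1 - α) q p :=
  ext fun z => by rw [mix_w_apply h0 h1, mix_w_apply (by linarith) (by linarith)]; ring

theorem mix_mix_mix {a s t : ℝ} (ha0 : 0 ≤ a) (ha1 : a ≤ 1) (hs0 : 0 ≤ s) (hs1 : s ≤ 1)
    (ht0 : 0 ≤ t) (ht1 : t ≤ 1) (p q : Lottery Z) :
    mix a (mix s p q) (mix t p q) = mix (a * s + (1 - a) * t) p q :=
  ext fun z => by
    rw [mix_w_apply ha0 ha1, mix_w_apply hs0 hs1, mix_w_apply ht0 ht1,
      mix_w_apply (by nlinarith) (by nlinarith)]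
    ring

theorem mix_mix_right {a s : ℝ} (ha0 : 0 ≤ a) (ha1 : a ≤ 1) (hs0 : 0 ≤ s) (hs1 : s ≤ 1)
    (p q : Lottery Z) : mix a (mix s p q) q = mix (a * s) p q := by
  simpa using mix_mix_mix ha0 ha1 hs0 hs1 le_rfl zero_le_one p q

theorem mix_left_mix {a t : ℝ} (ha0 : 0 ≤ a) (ha1 : a ≤ 1) (ht0 : 0 ≤ t) (ht1 : t ≤ 1)
    (p q : Lottery Z) : mix a p (mix t p q) = mix (a + (1 - a) * t) p q := by
  simpa using mix_mix_mix ha0 ha1 zero_le_one le_rfl ht0 ht1 p q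

theorem EU_mix {α : ℝ} (h0 : 0 ≤ α) (h1 : α ≤ 1) (u : Z → ℝ) (p q : Lottery Z) :
    EU u (mix α p q) = α * EU u p + (1 - α) * EU u q := by
  simp only [EU, mix, dif_pos (And.intro h0 h1)]
  rw [Finsupp.sum_add_index' (fun _ => zero_mul _) (fun _ _ _ => add_mul _ _ _),
    Finsupp.sum_smul_index (fun _ => zero_mul _), Finsupp.sum_smul_index (fun _ => zero_mul _),
    Finsupp.mul_sum, Finsupp.mul_sum]
  simp only [mul_assoc]

noncomputable def pure (z : Z) : Lottery Z where
  w := Finsupp.single z 1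
  nonneg z' := by
    classical
    rw [Finsupp.single_apply]
    split_ifs <;> norm_num
  total := Finsupp.sum_single_index rfl

theorem EU_pure (u : Z → ℝ) (z : Z) : EU u (pure z) = u z := by
  simp [EU, pure]

theorem sum_erase (p : Lottery Z) (z : Z) :
    (p.w.erase z).sum (fun _ x => x) = 1 - p.w z := by
  have h := p.total
  rw [← Finsupp.erase_add_single z p.w,
    Finsupp.sum_add_index' (fun _ => rfl) (fun _ _ _ => rfl),
    Finsupp.sum_single_index rfl] at h
  linarith

theorem erase_nonneg (p : Lottery Z) (z z' : Z) : 0 ≤ p.w.erase z z' := by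
  classical
  rw [Finsupp.erase_apply]
  split_ifs
  exacts [le_rfl, p.nonneg z']

theorem w_le_one (p : Lottery Z) (z : Z) : p.w z ≤ 1 := by
  have := Finsupp.sum_nonneg' (h₁ := fun _ x => x) (p.erase_nonneg z)
  rw [sum_erase] at this
  linarith

theorem eq_pure_of_w_eq_one {p : Lottery Z} {z : Z} (h : p.w z = 1) : p = pure z := by
  have hsum := p.sum_erase z
  rw [h, sub_self, Finsupp.sum,
    Finset.sum_eq_zero_iff_of_nonneg fun z' _ => p.erase_nonneg z z'] at hsum
  refine ext fun z' => ?_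
  by_cases hz : z' = z
  · simp [pure, hz, h]
  · have : p.w.erase z z' = 0 :=
      by_contra fun hne => hne (hsum z' (Finsupp.mem_support_iff.mpr hne))
    simpa [pure, hz, Ne.symm hz] using this

noncomputable def condNe (p : Lottery Z) (z : Z) (h : p.w z < 1) : Lottery Z where
  w := (1 - p.w z)⁻¹ • p.w.erase z
  nonneg z' := mul_nonneg (inv_nonneg.mpr (by linarith)) (p.erase_nonneg z z')
  total := by
    rw [Finsupp.sum_smul_index fun _ => rfl, ← Finsupp.mul_sum, sum_erase,
      inv_mul_cancel₀ (by linarith)]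

theorem support_condNe [DecidableEq Z] (p : Lottery Z) (z : Z) (h : p.w z < 1) :
    (p.condNe z h).w.support = p.w.support.erase z := by
  rw [condNe, Finsupp.support_smul_eq (inv_ne_zero (by linarith)), Finsupp.support_erase]

theorem mix_pure_condNe (p : Lottery Z) (z : Z) (h : p.w z < 1) :
    mix (p.w z) (pure z) (p.condNe z h) = p := by
  have hne : 1 - p.w z ≠ 0 := by linarith
  refine ext fun z' => ?_
  rw [mix_w_apply (p.nonneg z) (p.w_le_one z)]
  by_cases hz : z' = z
  · subst hz
    simp [pure, condNe]
  · simp [pure, condNe, hz, mul_inv_cancel_left₀ hne]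

theorem EU_comp_pure_eq_of_affine {f : Lottery Z → ℝ}
    (hf : ∀ α p q, 0 ≤ α → α ≤ 1 → f (mix α p q) = α * f p + (1 - α) * f q)
    (p : Lottery Z) : EU (fun z => f (pure z)) p = f p := by
  classical
  induction hn : p.w.support.card using Nat.strong_induction_on generalizing p with
  | _ n ih =>
    obtain ⟨z, hz⟩ : p.w.support.Nonempty := by
      by_contra hempty
      have := p.total
      rw [Finsupp.sum, Finset.not_nonempty_iff_eq_empty.mp hempty, Finset.sum_empty] at this
      exact zero_ne_one this
    rcases (p.w_le_one z).lt_or_eq with hlt | heq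
    · have hcard : (p.condNe z hlt).w.support.card < n := by
        rw [support_condNe, Finset.card_erase_of_mem hz, ← hn]
        exact Nat.sub_lt (Finset.card_pos.mpr ⟨z, hz⟩) one_pos
      rw [← p.mix_pure_condNe z hlt, EU_mix (p.nonneg z) (p.w_le_one z), EU_pure,
        ih _ hcard _ rfl, hf _ _ _ (p.nonneg z) (p.w_le_one z)]
    · rw [eq_pure_of_w_eq_one heq, EU_pure]

end Lottery

namespace VNM

open Lottery

variable {Z : Type*} {pr : Lottery Z → Lottery Z → Prop}

local infix:50 " ≻ " => pr

theorem asymm (h : VNM pr) {p q : Lottery Z} : p ≻ q → ¬ q ≻ p := h.1 p q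

theorem irrefl (h : VNM pr) (p : Lottery Z) : ¬ p ≻ p := fun hp => h.asymm hp hp

theorem not_pr_trans (h : VNM pr) {p q r : Lottery Z} (hqp : ¬ q ≻ p) (hrq : ¬ r ≻ q) :
    ¬ r ≻ p :=
  h.2.1 r q p hrq hqp

theorem pr_of_pr_of_not_pr (h : VNM pr) {p q r : Lottery Z} (hpq : p ≻ q) (hrq : ¬ r ≻ q) :
    p ≻ r :=
  by_contra fun hpr => h.2.1 p r q hpr hrq hpq

theorem pr_of_not_pr_of_pr (h : VNM pr) {p q r : Lottery Z} (hqp : ¬ q ≻ p) (hqr : q ≻ r) :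
    p ≻ r :=
  by_contra fun hpr => h.2.1 q p r hqp hpr hqr

theorem pr_trans (h : VNM pr) {p q r : Lottery Z} (hpq : p ≻ q) (hqr : q ≻ r) : p ≻ r :=
  h.pr_of_pr_of_not_pr hpq (h.asymm hqr)

theorem incompRel_trans (h : VNM pr) {p q r : Lottery Z} (hpq : IncompRel pr p q)
    (hqr : IncompRel pr q r) : IncompRel pr p r :=
  ⟨h.not_pr_trans hqr.1 hpq.1, h.not_pr_trans hpq.2 hqr.2⟩

theorem mix_pr_mix (h : VNM pr) {p q : Lottery Z} (r : Lottery Z) (hpq : p ≻ q) {α : ℝ}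
    (h0 : 0 < α) (h1 : α ≤ 1) : mix α p r ≻ mix α q r :=
  h.2.2.1 p q r hpq α h0 h1

theorem swap (h : VNM pr) : VNM (Function.swap pr) := by
  refine ⟨fun p q => h.asymm, fun p q r hpq hqr => h.not_pr_trans hpq hqr,
    fun p q r hpq α => h.mix_pr_mix r hpq, fun p q r hpq hqr => ?_⟩
  obtain ⟨α, β, hα0, hα1, hβ0, hβ1, hα, hβ⟩ := h.2.2.2 r q p hqr hpq
  refine ⟨1 - β, 1 - α, by linarith, by linarith, by linarith, by linarith, ?_, ?_⟩
  · rwa [← mix_comm hβ0.le hβ1.le]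
  · rwa [← mix_comm hα0.le hα1.le]

theorem mix_pr_of_pr (h : VNM pr) {p q : Lottery Z} (hpq : p ≻ q) {α : ℝ} (h0 : 0 < α)
    (h1 : α ≤ 1) : mix α p q ≻ q := by
  simpa only [mix_self h0.le h1] using h.mix_pr_mix q hpq h0 h1

theorem pr_mix_of_pr (h : VNM pr) {p q : Lottery Z} (hpq : p ≻ q) {α : ℝ} (h0 : 0 ≤ α)
    (h1 : α < 1) : p ≻ mix α p q := by
  have := h.mix_pr_mix p hpq (α := 1 - α) (by linarith) (by linarith)
  rwa [mix_self (by linarith) (by linarith), ← mix_comm h0 h1.le] at this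

theorem mix_pr_mix_of_lt (h : VNM pr) {p q : Lottery Z} (hpq : p ≻ q) {a b : ℝ}
    (ha : 0 ≤ a) (hab : a < b) (hb : b ≤ 1) : mix b p q ≻ mix a p q := by
  have hb0 : 0 < b := ha.trans_lt hab
  have hmix : mix (a / b) (mix b p q) q = mix a p q := by
    rw [mix_mix_right (by positivity) (div_le_one_of_le₀ hab.le hb0.le) hb0.le hb,
      div_mul_cancel₀ a hb0.ne']
  rw [← hmix]
  exact h.pr_mix_of_pr (h.mix_pr_of_pr hpq hb0 hb) (by positivity) ((div_lt_one hb0).mpr hab)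

theorem not_mix_pr_of_not_pr (h : VNM pr) {p r : Lottery Z} (hpr : ¬ p ≻ r) {α : ℝ}
    (h0 : 0 < α) (h1 : α < 1) : ¬ mix α p r ≻ r := by
  intro hmr
  have hmp : mix α p r ≻ p := h.pr_of_pr_of_not_pr hmr hpr
  exact h.asymm (h.pr_mix_of_pr hmr h0.le h1) (h.mix_pr_mix r hmp h0 h1.le)

/-- Otherwise continuity puts some `mix c q r` with `c > α` strictly below `mix α p r`, while
independence applied to `q ≻ mix (α / c) p r` puts it strictly above. -/
theorem not_mix_pr_mix_of_pr (h : VNM pr) {p q r : Lottery Z} (hpq : ¬ p ≻ q) (hpr : p ≻ r)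
    {α : ℝ} (h0 : 0 < α) (h1 : α < 1) : ¬ mix α p r ≻ mix α q r := by
  intro hviol
  have hq : ∀ {s}, 0 ≤ s → s < 1 → q ≻ mix s p r := fun hs0 hs1 =>
    h.pr_of_not_pr_of_pr hpq (h.pr_mix_of_pr hpr hs0 hs1)
  obtain ⟨-, β, -, -, hβ0, hβ1, -, hβ⟩ := h.2.2.2 _ _ _ (hq h0.le h1) hviol
  rw [mix_left_mix hβ0.le hβ1.le h0.le h1.le] at hβ
  set c := β + (1 - β) * α
  have hαc : α < c := by nlinarith
  have hc1 : c < 1 := by nlinarith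
  have hc0 : 0 < c := h0.trans hαc
  have hup := h.mix_pr_mix r (hq (s := α / c) (by positivity) ((div_lt_one hc0).mpr hαc)) hc0
    hc1.le
  rw [mix_mix_right hc0.le hc1.le (by positivity) ((div_lt_one hc0).mpr hαc).le,
    mul_div_cancel₀ α hc0.ne'] at hup
  exact h.asymm hβ hup

theorem not_mix_pr_mix (h : VNM pr) {p q : Lottery Z} (r : Lottery Z) (hpq : ¬ p ≻ q) {α : ℝ}
    (h0 : 0 ≤ α) (h1 : α ≤ 1) : ¬ mix α p r ≻ mix α q r := by
  rcases h0.eq_or_lt with rfl | h0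
  · simpa using h.irrefl r
  rcases h1.eq_or_lt with rfl | h1
  · simpa using hpq
  by_cases hpr : p ≻ r
  · exact h.not_mix_pr_mix_of_pr hpq hpr h0 h1
  by_cases hrq : r ≻ q
  · exact h.swap.not_mix_pr_mix_of_pr hpq hrq h0 h1
  exact h.not_pr_trans (h.swap.not_mix_pr_of_not_pr hrq h0 h1) (h.not_mix_pr_of_not_pr hpr h0 h1)

theorem not_mix_pr_mix_left (h : VNM pr) {p q : Lottery Z} (r : Lottery Z) (hpq : ¬ p ≻ q)
    {α : ℝ} (h0 : 0 ≤ α) (h1 : α ≤ 1) : ¬ mix α r p ≻ mix α r q := by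
  rw [mix_comm h0 h1, mix_comm h0 h1 r]
  exact h.not_mix_pr_mix r hpq (by linarith) (by linarith)

theorem incompRel_mix (h : VNM pr) {p q : Lottery Z} (r : Lottery Z) (hpq : IncompRel pr p q)
    {α : ℝ} (h0 : 0 ≤ α) (h1 : α ≤ 1) : IncompRel pr (mix α p r) (mix α q r) :=
  ⟨h.not_mix_pr_mix r hpq.1 h0 h1, h.not_mix_pr_mix r hpq.2 h0 h1⟩

theorem incompRel_mix_left (h : VNM pr) {p q : Lottery Z} (r : Lottery Z)
    (hpq : IncompRel pr p q) {α : ℝ} (h0 : 0 ≤ α) (h1 : α ≤ 1) :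
    IncompRel pr (mix α r p) (mix α r q) :=
  ⟨h.not_mix_pr_mix_left r hpq.1 h0 h1, h.not_mix_pr_mix_left r hpq.2 h0 h1⟩

def prefIcc (pr : Lottery Z → Lottery Z → Prop) (W B : Lottery Z) : Set (Lottery Z) :=
  {x | ¬ pr x B ∧ ¬ pr W x}

theorem left_mem_prefIcc (h : VNM pr) {W B : Lottery Z} (hBW : B ≻ W) : W ∈ prefIcc pr W B :=
  ⟨h.asymm hBW, h.irrefl W⟩

theorem right_mem_prefIcc (h : VNM pr) {W B : Lottery Z} (hBW : B ≻ W) : B ∈ prefIcc pr W B :=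
  ⟨h.irrefl B, h.asymm hBW⟩

theorem prefIcc_subset_prefIcc (h : VNM pr) {W B W' B' : Lottery Z} (hW : ¬ W' ≻ W)
    (hB : ¬ B ≻ B') : prefIcc pr W B ⊆ prefIcc pr W' B' :=
  fun _ hx => ⟨h.not_pr_trans hB hx.1, h.not_pr_trans hx.2 hW⟩

theorem pr_of_mem_prefIcc (h : VNM pr) {W B p q : Lottery Z} (hpq : p ≻ q)
    (hp : p ∈ prefIcc pr W B) (hq : q ∈ prefIcc pr W B) : B ≻ W :=
  h.pr_of_not_pr_of_pr hp.1 (h.pr_of_pr_of_not_pr hpq hq.2)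

theorem mix_mem_prefIcc (h : VNM pr) {W B x y : Lottery Z} (hx : x ∈ prefIcc pr W B)
    (hy : y ∈ prefIcc pr W B) {α : ℝ} (h0 : 0 ≤ α) (h1 : α ≤ 1) :
    mix α x y ∈ prefIcc pr W B := by
  constructor
  · have hB : ¬ mix α B y ≻ B := by
      simpa only [mix_self h0 h1] using h.not_mix_pr_mix_left B hy.1 h0 h1
    exact h.not_pr_trans hB (h.not_mix_pr_mix y hx.1 h0 h1)
  · have hW : ¬ W ≻ mix α W y := by
      simpa only [mix_self h0 h1] using h.not_mix_pr_mix_left W hy.2 h0 h1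
    exact h.not_pr_trans (h.not_mix_pr_mix y hx.2 h0 h1) hW

/-- For `x ∈ prefIcc pr W B` with `B ≻ W`, the weight `t` making `mix t B W` indifferent to `x`. -/
noncomputable def calib (pr : Lottery Z → Lottery Z → Prop) (W B x : Lottery Z) : ℝ :=
  sSup {s | s ∈ Set.Icc 0 1 ∧ ¬ pr (mix s B W) x}

theorem exists_lt_mix_pr (h : VNM pr) {W B x : Lottery Z} (hBW : B ≻ W) (hx : ¬ W ≻ x)
    {t : ℝ} (ht0 : 0 ≤ t) (ht1 : t ≤ 1) (htx : mix t B W ≻ x) :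
    ∃ s, 0 ≤ s ∧ s < t ∧ mix s B W ≻ x := by
  replace ht0 : 0 < t := ht0.lt_of_ne (by rintro rfl; exact hx (by simpa using htx))
  by_cases hxW : x ≻ W
  · obtain ⟨α, -, hα0, hα1, -, -, hα, -⟩ := h.2.2.2 _ _ _ htx hxW
    rw [mix_mix_right hα0.le hα1.le ht0.le ht1] at hα
    exact ⟨α * t, by positivity, by nlinarith, hα⟩
  · refine ⟨t / 2, by positivity, by linarith, h.pr_of_pr_of_not_pr ?_ hxW⟩
    exact h.mix_pr_of_pr hBW (by positivity) (by linarith)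

theorem calib_mem_Icc {W x : Lottery Z} (B : Lottery Z) (hx : ¬ W ≻ x) :
    calib pr W B x ∈ Set.Icc 0 1 := by
  have h0 : (0 : ℝ) ∈ {s | s ∈ Set.Icc 0 1 ∧ ¬ pr (mix s B W) x} :=
    ⟨⟨le_rfl, zero_le_one⟩, by simpa using hx⟩
  exact ⟨le_csSup ⟨1, fun s hs => hs.1.2⟩ h0, csSup_le ⟨0, h0⟩ fun s hs => hs.1.2⟩

theorem incompRel_mix_calib (h : VNM pr) {W B x : Lottery Z} (hBW : B ≻ W)
    (hx : x ∈ prefIcc pr W B) : IncompRel pr (mix (calib pr W B x) B W) x := by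
  set S := {s | s ∈ Set.Icc 0 1 ∧ ¬ pr (mix s B W) x}
  have hS0 : (0 : ℝ) ∈ S := ⟨⟨le_rfl, zero_le_one⟩, by simpa using hx.2⟩
  have hSbdd : BddAbove S := ⟨1, fun s hs => hs.1.2⟩
  obtain ⟨ht0, ht1⟩ := calib_mem_Icc B hx.2
  constructor
  · intro htx
    obtain ⟨s, hs0, hst, hsx⟩ := h.exists_lt_mix_pr hBW hx.2 ht0 ht1 htx
    have : calib pr W B x ≤ s := csSup_le ⟨0, hS0⟩ fun u hu =>
      not_lt.mp fun hsu => hu.2 (h.pr_trans (h.mix_pr_mix_of_lt hBW hs0 hsu hu.1.2) hsx)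
    linarith
  · intro hxt
    have hxt' : Function.swap pr (mix (1 - calib pr W B x) W B) x := by
      rwa [Function.swap, ← mix_comm ht0 ht1]
    obtain ⟨s, hs0, hst, hsx⟩ :=
      h.swap.exists_lt_mix_pr hBW hx.1 (by linarith) (by linarith) hxt'
    rw [Function.swap, mix_comm hs0 (by linarith)] at hsx
    have : 1 - s ≤ calib pr W B x :=
      le_csSup hSbdd ⟨⟨by linarith, by linarith⟩, h.asymm hsx⟩
    linarith

theorem calib_eq_of_incompRel (h : VNM pr) {W B x : Lottery Z} (hBW : B ≻ W)
    (hx : x ∈ prefIcc pr W B) {c : ℝ} (hc : c ∈ Set.Icc 0 1)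
    (hcx : IncompRel pr (mix c B W) x) : calib pr W B x = c := by
  obtain ⟨ht0, ht1⟩ := calib_mem_Icc B hx.2
  have hct := h.incompRel_trans (h.incompRel_mix_calib hBW hx) hcx.symm
  rcases lt_trichotomy (calib pr W B x) c with hlt | heq | hgt
  · exact absurd (h.mix_pr_mix_of_lt hBW ht0 hlt hc.2) hct.2
  · exact heq
  · exact absurd (h.mix_pr_mix_of_lt hBW hc.1 hgt ht1) hct.1

theorem calib_congr (h : VNM pr) {W B x y : Lottery Z} (hBW : B ≻ W)
    (hx : x ∈ prefIcc pr W B) (hy : y ∈ prefIcc pr W B) (hxy : IncompRel pr x y) :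
    calib pr W B x = calib pr W B y :=
  (h.calib_eq_of_incompRel hBW hy (calib_mem_Icc B hx.2)
    (h.incompRel_trans (h.incompRel_mix_calib hBW hx) hxy)).symm

theorem pr_of_calib_lt_calib (h : VNM pr) {W B x y : Lottery Z} (hBW : B ≻ W)
    (hx : x ∈ prefIcc pr W B) (hy : y ∈ prefIcc pr W B)
    (hlt : calib pr W B y < calib pr W B x) : x ≻ y :=
  h.pr_of_not_pr_of_pr (h.incompRel_mix_calib hBW hx).1 <|
    h.pr_of_pr_of_not_pr (h.mix_pr_mix_of_lt hBW (calib_mem_Icc B hy.2).1 hlt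
      (calib_mem_Icc B hx.2).2) (h.incompRel_mix_calib hBW hy).2

theorem calib_lt_calib_iff (h : VNM pr) {W B x y : Lottery Z} (hBW : B ≻ W)
    (hx : x ∈ prefIcc pr W B) (hy : y ∈ prefIcc pr W B) :
    calib pr W B y < calib pr W B x ↔ x ≻ y := by
  refine ⟨h.pr_of_calib_lt_calib hBW hx hy, fun hxy => not_le.mp fun hle => ?_⟩
  rcases hle.lt_or_eq with hlt | heq
  · exact h.asymm hxy (h.pr_of_calib_lt_calib hBW hy hx hlt)
  · refine (h.incompRel_trans (h.incompRel_mix_calib hBW hx).symm ?_).1 hxy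
    rw [heq]
    exact h.incompRel_mix_calib hBW hy

theorem calib_mix (h : VNM pr) {W B x y : Lottery Z} (hBW : B ≻ W) (hx : x ∈ prefIcc pr W B)
    (hy : y ∈ prefIcc pr W B) {α : ℝ} (h0 : 0 ≤ α) (h1 : α ≤ 1) :
    calib pr W B (mix α x y) = α * calib pr W B x + (1 - α) * calib pr W B y := by
  obtain ⟨hx0, hx1⟩ := calib_mem_Icc B hx.2
  obtain ⟨hy0, hy1⟩ := calib_mem_Icc B hy.2
  refine h.calib_eq_of_incompRel hBW (h.mix_mem_prefIcc hx hy h0 h1)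
    ⟨by nlinarith, by nlinarith⟩ ?_
  rw [← mix_mix_mix h0 h1 hx0 hx1 hy0 hy1]
  exact h.incompRel_trans (h.incompRel_mix_left _ (h.incompRel_mix_calib hBW hy) h0 h1)
    (h.incompRel_mix y (h.incompRel_mix_calib hBW hx) h0 h1)

noncomputable def normCalib (pr : Lottery Z → Lottery Z → Prop) (p₀ q₀ W B x : Lottery Z) : ℝ :=
  (calib pr W B x - calib pr W B q₀) / (calib pr W B p₀ - calib pr W B q₀)

/-- On a larger interval the calibration is an increasing affine function of the calibration on
a smaller one, so the normalized calibrations agree. -/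
theorem normCalib_eq_of_subset (h : VNM pr) {p₀ q₀ W B W' B' x : Lottery Z} (h₀ : p₀ ≻ q₀)
    (hW : ¬ W' ≻ W) (hB : ¬ B ≻ B') (hp : p₀ ∈ prefIcc pr W B) (hq : q₀ ∈ prefIcc pr W B)
    (hx : x ∈ prefIcc pr W B) : normCalib pr p₀ q₀ W' B' x = normCalib pr p₀ q₀ W B x := by
  have hBW := h.pr_of_mem_prefIcc h₀ hp hq
  have hsub := h.prefIcc_subset_prefIcc hW hB
  have hB'W' := h.pr_of_mem_prefIcc h₀ (hsub hp) (hsub hq)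
  have hWmem := hsub (h.left_mem_prefIcc hBW)
  have hBmem := hsub (h.right_mem_prefIcc hBW)
  have hcalib : ∀ y ∈ prefIcc pr W B, calib pr W' B' y =
      calib pr W' B' W + calib pr W B y * (calib pr W' B' B - calib pr W' B' W) := by
    intro y hy
    obtain ⟨hc0, hc1⟩ := calib_mem_Icc B hy.2
    rw [h.calib_congr hB'W' (hsub hy) (h.mix_mem_prefIcc hBmem hWmem hc0 hc1)
      (h.incompRel_mix_calib hBW hy).symm, h.calib_mix hB'W' hBmem hWmem hc0 hc1]
    ring
  have hd : calib pr W' B' B - calib pr W' B' W ≠ 0 :=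
    sub_ne_zero.mpr ((h.calib_lt_calib_iff hB'W' hBmem hWmem).mpr hBW).ne'
  simp only [normCalib, hcalib x hx, hcalib p₀ hp, hcalib q₀ hq, add_sub_add_left_eq_sub,
    ← sub_mul]
  exact mul_div_mul_right _ _ hd

open Classical in
noncomputable def prefMax (pr : Lottery Z → Lottery Z → Prop) (p q : Lottery Z) : Lottery Z :=
  if pr p q then p else q

open Classical in
noncomputable def prefMin (pr : Lottery Z → Lottery Z → Prop) (p q : Lottery Z) : Lottery Z :=
  if pr p q then q else p

theorem not_pr_prefMax_left (h : VNM pr) (p q : Lottery Z) : ¬ p ≻ prefMax pr p q := by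
  unfold prefMax
  split_ifs with hpq
  exacts [h.irrefl p, hpq]

theorem not_pr_prefMax_right (h : VNM pr) (p q : Lottery Z) : ¬ q ≻ prefMax pr p q := by
  unfold prefMax
  split_ifs with hpq
  exacts [h.asymm hpq, h.irrefl q]

theorem not_prefMin_pr_left (h : VNM pr) (p q : Lottery Z) : ¬ prefMin pr p q ≻ p := by
  unfold prefMin
  split_ifs with hpq
  exacts [h.asymm hpq, h.irrefl p]

theorem not_prefMin_pr_right (h : VNM pr) (p q : Lottery Z) : ¬ prefMin pr p q ≻ q := by
  unfold prefMin
  split_ifs with hpq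
  exacts [h.irrefl q, hpq]

theorem mem_prefIcc_prefMin_prefMax (h : VNM pr) (x W B : Lottery Z) :
    x ∈ prefIcc pr (prefMin pr x W) (prefMax pr x B) :=
  ⟨h.not_pr_prefMax_left x B, h.not_prefMin_pr_left x W⟩

theorem prefIcc_subset_prefMin_prefMax (h : VNM pr) (x W B : Lottery Z) :
    prefIcc pr W B ⊆ prefIcc pr (prefMin pr x W) (prefMax pr x B) :=
  h.prefIcc_subset_prefIcc (h.not_prefMin_pr_right x W) (h.not_pr_prefMax_right x B)

/-- Any interval containing `x`, `p₀` and `q₀` gives the same value (`utility_eq_normCalib`). -/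
noncomputable def utility (pr : Lottery Z → Lottery Z → Prop) (p₀ q₀ x : Lottery Z) : ℝ :=
  normCalib pr p₀ q₀ (prefMin pr x q₀) (prefMax pr x p₀) x

theorem utility_eq_normCalib (h : VNM pr) {p₀ q₀ W B x : Lottery Z} (h₀ : p₀ ≻ q₀)
    (hp : p₀ ∈ prefIcc pr W B) (hq : q₀ ∈ prefIcc pr W B) (hx : x ∈ prefIcc pr W B) :
    utility pr p₀ q₀ x = normCalib pr p₀ q₀ W B x := by
  set Wx := prefMin pr x q₀
  set Bx := prefMax pr x p₀
  have hsub := h.prefIcc_subset_prefMin_prefMax x q₀ p₀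
  calc utility pr p₀ q₀ x = normCalib pr p₀ q₀ Wx Bx x := rfl
    _ = normCalib pr p₀ q₀ (prefMin pr W Wx) (prefMax pr B Bx) x :=
      (h.normCalib_eq_of_subset h₀ (h.not_prefMin_pr_right W Wx) (h.not_pr_prefMax_right B Bx)
        (hsub (h.right_mem_prefIcc h₀)) (hsub (h.left_mem_prefIcc h₀))
        (h.mem_prefIcc_prefMin_prefMax x q₀ p₀)).symm
    _ = normCalib pr p₀ q₀ W B x :=
      h.normCalib_eq_of_subset h₀ (h.not_prefMin_pr_left W Wx) (h.not_pr_prefMax_left B Bx)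
        hp hq hx

theorem exists_prefIcc (h : VNM pr) {p₀ q₀ : Lottery Z} (h₀ : p₀ ≻ q₀) (x y : Lottery Z) :
    ∃ W B, p₀ ∈ prefIcc pr W B ∧ q₀ ∈ prefIcc pr W B ∧ x ∈ prefIcc pr W B ∧
      y ∈ prefIcc pr W B := by
  have hsub := h.prefIcc_subset_prefMin_prefMax x (prefMin pr y q₀) (prefMax pr y p₀)
  have hsub₀ := (h.prefIcc_subset_prefMin_prefMax y q₀ p₀).trans hsub
  exact ⟨_, _, hsub₀ (h.right_mem_prefIcc h₀), hsub₀ (h.left_mem_prefIcc h₀),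
    h.mem_prefIcc_prefMin_prefMax x _ _, hsub (h.mem_prefIcc_prefMin_prefMax y q₀ p₀)⟩

theorem utility_lt_utility_iff (h : VNM pr) {p₀ q₀ : Lottery Z} (h₀ : p₀ ≻ q₀)
    (x y : Lottery Z) : utility pr p₀ q₀ y < utility pr p₀ q₀ x ↔ x ≻ y := by
  obtain ⟨W, B, hp, hq, hx, hy⟩ := h.exists_prefIcc h₀ x y
  have hBW := h.pr_of_mem_prefIcc h₀ hp hq
  have hd := sub_pos.mpr ((h.calib_lt_calib_iff hBW hp hq).mpr h₀)
  rw [h.utility_eq_normCalib h₀ hp hq hx, h.utility_eq_normCalib h₀ hp hq hy, normCalib,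
    normCalib, div_lt_div_iff_of_pos_right hd, sub_lt_sub_iff_right,
    h.calib_lt_calib_iff hBW hx hy]

theorem utility_mix (h : VNM pr) {p₀ q₀ : Lottery Z} (h₀ : p₀ ≻ q₀) (x y : Lottery Z) {α : ℝ}
    (h0 : 0 ≤ α) (h1 : α ≤ 1) :
    utility pr p₀ q₀ (mix α x y) = α * utility pr p₀ q₀ x + (1 - α) * utility pr p₀ q₀ y := by
  obtain ⟨W, B, hp, hq, hx, hy⟩ := h.exists_prefIcc h₀ x y
  have hBW := h.pr_of_mem_prefIcc h₀ hp hq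
  rw [h.utility_eq_normCalib h₀ hp hq hx, h.utility_eq_normCalib h₀ hp hq hy,
    h.utility_eq_normCalib h₀ hp hq (h.mix_mem_prefIcc hx hy h0 h1), normCalib, normCalib,
    normCalib, h.calib_mix hBW hx hy h0 h1]
  ring

end VNM

theorem vnm_expected_utility_representation_general {Z : Type*}
    (pr : Lottery Z → Lottery Z → Prop) (h : VNM pr) :
    ∃ u : Z → ℝ, ∀ p q : Lottery Z, pr p q ↔ EU u p > EU u q := by
  by_cases hnontrivial : ∃ p₀ q₀, pr p₀ q₀
  · obtain ⟨p₀, q₀, h₀⟩ := hnontrivial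
    have hEU := Lottery.EU_comp_pure_eq_of_affine fun α x y h0 h1 => h.utility_mix h₀ x y h0 h1
    refine ⟨fun z => VNM.utility pr p₀ q₀ (Lottery.pure z), fun p q => ?_⟩
    rw [gt_iff_lt, hEU, hEU, h.utility_lt_utility_iff h₀]
  · refine ⟨0, fun p q => ?_⟩
    simp only [not_exists] at hnontrivial
    simp [EU, hnontrivial]

/-- **Expected utility representation.** Any relation on lotteries satisfying the VNM
axioms is represented by the expected value of some utility function. -/
theorem vnm_expected_utility_representation {Z : Type*} [Nonempty Z]
    (pr : Lottery Z → Lottery Z → Prop) (h : VNM pr) :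
    ∃ u : Z → ℝ, ∀ p q : Lottery Z, pr p q ↔ EU u p > EU u q :=
  vnm_expected_utility_representation_general pr h
end

section
/- Let Z be a nonempty set, ≻ a binary relation on lotteries over Z, and u : Z → ℝ such that for all lotteries p, q: p ≻ q if and only if E_p[u] > E_q[u]. Then a function u† : Z → ℝ satisfies (for all lotteries p, q: p ≻ q if and only if E_p[u†] > E_q[u†]) if and only if there exist a > 0 and b ∈ ℝ with u†(z) = a·u(z) + b for all z ∈ Z. -/
open scoped BigOperators

/-! Expected utility is affine under mixing, so when `u x ≤ u y ≤ u w` the outcome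
`y` is `u`-indifferent to a mixture of `w` and `x`. A utility `u'` inducing the same order on
lotteries must also be indifferent between them, which forces the points `(u z, u' z)` to be
collinear; the order on two strictly ranked outcomes makes the slope positive. -/

lemma exists_mem_Icc_mul_sub_eq {a b c : ℝ} (hab : a ≤ b) (hbc : b ≤ c) :
    ∃ t ∈ Set.Icc (0 : ℝ) 1, t * (c - a) = b - a := by
  rcases hab.eq_or_lt with rfl | hlt
  · exact ⟨0, by simp, by simp⟩
  have hca : 0 < c - a := by linarith
  refine ⟨(b - a) / (c - a), ⟨by positivity, (div_le_one hca).2 (by linarith)⟩, ?_⟩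
  field_simp

lemma eq_of_lt_iff_lt {α β γ : Type*} [LinearOrder β] [LinearOrder γ] {f : α → β} {g : α → γ}
    (h : ∀ a b, f a < f b ↔ g a < g b) {a b : α} (hab : f a = f b) : g a = g b := by
  by_contra hne
  rcases lt_or_gt_of_ne hne with hlt | hlt
  · exact ((h a b).2 hlt).ne hab
  · exact ((h b a).2 hlt).ne' hab

namespace Lottery

variable {Z : Type*}

noncomputable def dirac (z : Z) : Lottery Z where
  w := Finsupp.single z 1
  nonneg z' := by
    classical
    rw [Finsupp.single_apply]
    split <;> norm_num
  total := Finsupp.sum_single_index rfl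

end Lottery

section ExpectedUtility

variable {Z : Type*}

@[simp]
lemma EU_dirac (u : Z → ℝ) (z : Z) : EU u (Lottery.dirac z) = u z := by
  rw [EU, Lottery.dirac, Finsupp.sum_single_index (zero_mul _), one_mul]

lemma EU_mix (u : Z → ℝ) (p q : Lottery Z) {α : ℝ} (h0 : 0 ≤ α) (h1 : α ≤ 1) :
    EU u (Lottery.mix α p q) = α * EU u p + (1 - α) * EU u q := by
  rw [Lottery.mix, dif_pos ⟨h0, h1⟩, EU, EU, EU,
    Finsupp.sum_add_index' (fun _ => zero_mul _) (fun _ _ _ => add_mul _ _ _),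
    Finsupp.sum_smul_index (fun _ => zero_mul _), Finsupp.sum_smul_index (fun _ => zero_mul _),
    Finsupp.mul_sum, Finsupp.mul_sum]
  congr 1 <;> exact Finsupp.sum_congr fun _ _ => mul_assoc _ _ _

lemma EU_affine (u : Z → ℝ) (a b : ℝ) (p : Lottery Z) :
    EU (fun z => a * u z + b) p = a * EU u p + b := by
  have h : (p.w.sum fun z x => x * (a * u z + b)) = p.w.sum fun z x => a * (x * u z) + b * x :=
    Finsupp.sum_congr fun _ _ => by ring
  rw [EU, h, Finsupp.sum_add, ← Finsupp.mul_sum, ← Finsupp.mul_sum, p.total, mul_one, EU]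

def SameEUOrder (u u' : Z → ℝ) : Prop :=
  ∀ p q : Lottery Z, EU u p < EU u q ↔ EU u' p < EU u' q

namespace SameEUOrder

variable {u u' : Z → ℝ}

lemma apply_lt_apply (h : SameEUOrder u u') {x y : Z} (hxy : u x < u y) : u' x < u' y := by
  simpa using (h (Lottery.dirac x) (Lottery.dirac y)).1 (by simpa using hxy)

lemma apply_eq_apply (h : SameEUOrder u u') {x y : Z} (hxy : u x = u y) : u' x = u' y := by
  simpa using eq_of_lt_iff_lt h (a := Lottery.dirac x) (b := Lottery.dirac y) (by simpa using hxy)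

lemma sub_mul_sub_eq_of_le_of_le (h : SameEUOrder u u') {x y w : Z}
    (hxy : u x ≤ u y) (hyw : u y ≤ u w) :
    (u' y - u' x) * (u w - u x) = (u y - u x) * (u' w - u' x) := by
  obtain ⟨t, ⟨ht0, ht1⟩, ht⟩ := exists_mem_Icc_mul_sub_eq hxy hyw
  have hu : EU u (Lottery.mix t (Lottery.dirac w) (Lottery.dirac x)) = EU u (Lottery.dirac y) := by
    rw [EU_mix u _ _ ht0 ht1, EU_dirac, EU_dirac, EU_dirac]
    linear_combination ht
  have hu' := eq_of_lt_iff_lt h hu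
  rw [EU_mix u' _ _ ht0 ht1, EU_dirac, EU_dirac, EU_dirac] at hu'
  linear_combination -(u w - u x) * hu' + (u' w - u' x) * ht

lemma sub_mul_sub_eq (h : SameEUOrder u u') {z₀ z₁ : Z} (h01 : u z₀ < u z₁) (z : Z) :
    (u' z - u' z₀) * (u z₁ - u z₀) = (u z - u z₀) * (u' z₁ - u' z₀) := by
  rcases le_total (u z) (u z₀) with hz0 | hz0
  · linear_combination -h.sub_mul_sub_eq_of_le_of_le hz0 h01.le
  rcases le_total (u z) (u z₁) with hz1 | hz1
  · exact h.sub_mul_sub_eq_of_le_of_le hz0 hz1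
  · linear_combination -h.sub_mul_sub_eq_of_le_of_le h01.le hz1

lemma exists_pos_affine [Nonempty Z] (h : SameEUOrder u u') :
    ∃ a b : ℝ, 0 < a ∧ ∀ z, u' z = a * u z + b := by
  by_cases hu : ∃ z₀ z₁, u z₀ < u z₁
  · obtain ⟨z₀, z₁, h01⟩ := hu
    have hpos : 0 < u z₁ - u z₀ := sub_pos.2 h01
    refine ⟨(u' z₁ - u' z₀) / (u z₁ - u z₀), u' z₀ - (u' z₁ - u' z₀) / (u z₁ - u z₀) * u z₀,
      div_pos (sub_pos.2 (h.apply_lt_apply h01)) hpos, fun z => ?_⟩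
    field_simp
    linear_combination h.sub_mul_sub_eq h01 z
  · push Not at hu
    obtain ⟨z₀⟩ := ‹Nonempty Z›
    refine ⟨1, u' z₀ - u z₀, one_pos, fun z => ?_⟩
    have hz : u z = u z₀ := le_antisymm (hu z₀ z) (hu z z₀)
    linear_combination h.apply_eq_apply hz - hz

end SameEUOrder

end ExpectedUtility

/-- **Uniqueness of the expected utility representation up to positive affine
transformation.** If `u` represents `≻` via expected utility, then `u†` also
represents `≻` if and only if `u† = a·u + b` for some `a > 0` and `b ∈ ℝ`. -/
theorem expected_utility_representation_unique_iff_positive_affine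
    {Z : Type*} [Nonempty Z] (pr : Lottery Z → Lottery Z → Prop) (u : Z → ℝ)
    (hrep : ∀ p q : Lottery Z, pr p q ↔ EU u p > EU u q) (u' : Z → ℝ) :
    (∀ p q : Lottery Z, pr p q ↔ EU u' p > EU u' q) ↔
      ∃ (a b : ℝ), 0 < a ∧ ∀ z : Z, u' z = a * u z + b := by
  constructor
  · intro hrep'
    exact SameEUOrder.exists_pos_affine fun p q => (hrep q p).symm.trans (hrep' q p)
  · rintro ⟨a, b, ha, hu'⟩ p q
    rw [hrep, show u' = fun z => a * u z + b from funext hu', EU_affine, EU_affine, gt_iff_lt,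
      gt_iff_lt, add_lt_add_iff_right, mul_lt_mul_iff_right₀ ha]
end

section
/- Let E be a real vector space, C ⊆ E a nonempty convex set, and f, g : C → ℝ affine functions (f(β·x + (1−β)·y) = β·f(x) + (1−β)·f(y) for all x, y ∈ C and β ∈ [0,1], similarly for g). Suppose that for all x, y ∈ C, f(x) > f(y) if and only if g(x) > g(y). Then there exist a > 0 and b ∈ ℝ such that f(x) = a·g(x) + b for all x ∈ C. -/
/-!
Whenever `g u ≤ g w ≤ g v`, the point of the segment `[u, v]` with the same `g`-value as `w`
must also have the same `f`-value as `w`, since `f` and `g` rank points identically. Affinity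
along the segment then forces the three points `(g u, f u)`, `(g v, f v)`, `(g w, f w)` onto
one line. So the whole image of `C` under `x ↦ (g x, f x)` lies on a line, whose slope is
positive because `f` and `g` increase together.
-/

def OrdinallyEquivOn {α β γ : Type*} [LT β] [LT γ] (C : Set α) (f : α → β) (g : α → γ) :
    Prop :=
  ∀ x ∈ C, ∀ y ∈ C, (f x > f y ↔ g x > g y)

namespace OrdinallyEquivOn

theorem eq_of_eq {α β γ : Type*} [LinearOrder β] [Preorder γ] {C : Set α} {f : α → β}
    {g : α → γ} (h : OrdinallyEquivOn C f g) {x y : α} (hx : x ∈ C) (hy : y ∈ C)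
    (hxy : g x = g y) : f x = f y :=
  le_antisymm (not_lt.mp fun hlt => ((h x hx y hy).mp hlt).ne' hxy)
    (not_lt.mp fun hlt => ((h y hy x hx).mp hlt).ne hxy)

theorem sub_div_sub_pos {α : Type*} {C : Set α} {f g : α → ℝ}
    (h : OrdinallyEquivOn C f g) {x y : α} (hx : x ∈ C) (hy : y ∈ C)
    (hxy : g x ≠ g y) : 0 < (f x - f y) / (g x - g y) := by
  rcases hxy.lt_or_gt with hlt | hgt
  · exact div_pos_of_neg_of_neg (sub_neg.mpr ((h y hy x hx).mpr hlt)) (sub_neg.mpr hlt)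
  · exact div_pos (sub_pos.mpr ((h x hx y hy).mpr hgt)) (sub_pos.mpr hgt)

end OrdinallyEquivOn

section

variable {E : Type*} [AddCommGroup E] [Module ℝ E]

def IsAffineOn (C : Set E) (f : E → ℝ) : Prop :=
  ∀ x ∈ C, ∀ y ∈ C, ∀ β : ℝ, 0 ≤ β → β ≤ 1 →
    f (β • x + (1 - β) • y) = β * f x + (1 - β) * f y

namespace OrdinallyEquivOn

variable {C : Set E} {f g : E → ℝ}

theorem collinear_of_le_of_le (h : OrdinallyEquivOn C f g) (hconv : Convex ℝ C)
    (hf : IsAffineOn C f) (hg : IsAffineOn C g) {u v w : E} (hu : u ∈ C) (hv : v ∈ C)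
    (hw : w ∈ C) (huw : g u ≤ g w) (hwv : g w ≤ g v) :
    (f v - f u) * (g w - g u) = (g v - g u) * (f w - f u) := by
  rcases huw.lt_or_eq with huw | huw
  · have hΔ : 0 < g v - g u := by linarith
    set t := (g w - g u) / (g v - g u)
    have hwt : g w - g u = t * (g v - g u) := (div_mul_cancel₀ _ hΔ.ne').symm
    have ht0 : 0 ≤ t := div_nonneg (by linarith) hΔ.le
    have ht1 : t ≤ 1 := (div_le_one hΔ).mpr (by linarith)
    have hm : t • v + (1 - t) • u ∈ C := hconv hv hu ht0 (by linarith) (by ring)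
    have hfw : t * f v + (1 - t) * f u = f w := by
      rw [← hf v hv u hu t ht0 ht1]
      refine h.eq_of_eq hm hw ?_
      rw [hg v hv u hu t ht0 ht1]
      linear_combination -hwt
    linear_combination (f v - f u) * hwt + (g v - g u) * hfw
  · rw [← huw, h.eq_of_eq hw hu huw.symm]
    ring

theorem collinear (h : OrdinallyEquivOn C f g) (hconv : Convex ℝ C) (hf : IsAffineOn C f)
    (hg : IsAffineOn C g) {u v w : E} (hu : u ∈ C) (hv : v ∈ C) (hw : w ∈ C) :
    (f v - f u) * (g w - g u) = (g v - g u) * (f w - f u) := by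
  -- The difference of the two sides is alternating in `u, v, w`, so we may sort by `g`-value.
  rcases le_total (g u) (g w) with huw | hwu <;> rcases le_total (g w) (g v) with hwv | hvw
  · exact h.collinear_of_le_of_le hconv hf hg hu hv hw huw hwv
  · rcases le_total (g u) (g v) with huv | hvu
    · linear_combination -h.collinear_of_le_of_le hconv hf hg hu hw hv huv hvw
    · linear_combination h.collinear_of_le_of_le hconv hf hg hv hw hu hvu huw
  · rcases le_total (g u) (g v) with huv | hvu
    · linear_combination -h.collinear_of_le_of_le hconv hf hg hw hv hu hwu huv
    · linear_combination h.collinear_of_le_of_le hconv hf hg hw hu hv hwv hvu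
  · linear_combination -h.collinear_of_le_of_le hconv hf hg hv hu hw hvw hwu

end OrdinallyEquivOn

end

/-- **Ordinal equivalence of affine functionals.** If two affine real-valued functions
on a nonempty convex subset `C` of a real vector space induce the same strict ordering,
then one is a positive affine transformation of the other. -/
theorem affine_ordinal_equiv_positive_affine
    {E : Type*} [AddCommGroup E] [Module ℝ E] {C : Set E}
    (hne : C.Nonempty) (hconv : Convex ℝ C) (f g : E → ℝ)
    (hf : ∀ x ∈ C, ∀ y ∈ C, ∀ β : ℝ, 0 ≤ β → β ≤ 1 →
        f (β • x + (1 - β) • y) = β * f x + (1 - β) * f y)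
    (hg : ∀ x ∈ C, ∀ y ∈ C, ∀ β : ℝ, 0 ≤ β → β ≤ 1 →
        g (β • x + (1 - β) • y) = β * g x + (1 - β) * g y)
    (horder : ∀ x ∈ C, ∀ y ∈ C, (f x > f y ↔ g x > g y)) :
    ∃ (a b : ℝ), 0 < a ∧ ∀ x ∈ C, f x = a * g x + b := by
  have hord : OrdinallyEquivOn C f g := horder
  obtain ⟨x₀, hx₀⟩ := hne
  by_cases hconst : ∀ x ∈ C, g x = g x₀
  · refine ⟨1, f x₀ - g x₀, one_pos, fun x hx => ?_⟩
    rw [hord.eq_of_eq hx hx₀ (hconst x hx), hconst x hx]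
    ring
  push Not at hconst
  obtain ⟨x₁, hx₁, hne₁⟩ := hconst
  refine ⟨_, f x₀ - (f x₁ - f x₀) / (g x₁ - g x₀) * g x₀, hord.sub_div_sub_pos hx₁ hx₀ hne₁,
    fun x hx => ?_⟩
  field_simp [sub_ne_zero.mpr hne₁]
  linear_combination -hord.collinear hconv hf hg hx₀ hx₁ hx
end

section
/- Let S, A, T, 𝒫 be as in the MDP context and let V : S × 𝒫 → ℝ be mixture-affine. Suppose V is dynamically consistent: for all s ∈ S, a ∈ A, and Π, Ω ∈ 𝒫, V(s, a·Π) > V(s, a·Ω) if and only if V̄(s,a,Π) > V̄(s,a,Ω). Then there exist a reward function R : S × A → ℝ and a discount function γ : S × A → ℝ with γ(s,a) > 0 for all (s,a), such that V(s, a·Π) = R(s,a) + γ(s,a)·V̄(s,a,Π) for all s ∈ S, a ∈ A, Π ∈ 𝒫. -/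
open scoped BigOperators

/-- The one-step expected value `V̄(s,a,π) = E_{s' ~ T(s,a)}[V(s',π)]`. -/
noncomputable def Vbar {S A P : Type*} [Fintype S]
    (T : S → A → S → ℝ) (V : S → P → ℝ) (s : S) (a : A) (π : P) : ℝ :=
  ∑ s', T s a s' * V s' π

/-- `V` is mixture-affine with respect to the policy-mixing operation `mix`. -/
def MixAffine {S P : Type*} (mix : ℝ → P → P → P) (V : S → P → ℝ) : Prop :=
  ∀ (s : S) (β : ℝ), 0 ≤ β → β ≤ 1 → ∀ π ω : P,
    V s (mix β π ω) = β * V s π + (1 - β) * V s ω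

/-- `V` satisfies the generalized Bellman form with reward `R` and discount `γ`. -/
def BellmanForm {S A P : Type*} [Fintype S] (T : S → A → S → ℝ) (act : A → P → P)
    (V : S → P → ℝ) (R : S → A → ℝ) (γ : S → A → ℝ) : Prop :=
  ∀ (s : S) (a : A) (π : P), V s (act a π) = R s a + γ s a * Vbar T V s a π

/-- The conflict condition for `(V1, V2)` at `(s, a)`: there are policies `π, ω, l`
on which the one-step expected values of `V1` and `V2` are oppositely ordered, with
non-symmetric crossing points `β1 ≠ β2`. -/
def Conflict {S A P : Type*} [Fintype S]
    (T : S → A → S → ℝ) (V1 V2 : S → P → ℝ) (s : S) (a : A) : Prop :=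
  ∃ π ω l : P,
    Vbar T V1 s a π > Vbar T V1 s a l ∧ Vbar T V1 s a l > Vbar T V1 s a ω ∧
    Vbar T V2 s a ω > Vbar T V2 s a l ∧ Vbar T V2 s a l > Vbar T V2 s a π ∧
    (Vbar T V1 s a l - Vbar T V1 s a ω) / (Vbar T V1 s a π - Vbar T V1 s a ω) ≠
      (Vbar T V2 s a l - Vbar T V2 s a ω) / (Vbar T V2 s a π - Vbar T V2 s a ω)

/-
If `f` and `g` are affine along `mix` and induce the same strict order, then equal `g`-values
force equal `f`-values.  Given `g ω ≤ g l ≤ g π`, affineness produces a mixture of `π` and `ω`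
with the same `g`-value as `l`, hence the same `f`-value, so the points `(g, f)` at `π, ω, l`
are collinear.  Fixing one pair with `g ω < g π`, every `l` lies on the line through the other
two, which has positive slope.  Applied to `f = V(s, a·-)` and `g = V̄(s, a, -)` for each `(s, a)`,
this gives `R(s, a)` and `γ(s, a)`.
-/

def IsMixAffine {P : Type*} (mix : ℝ → P → P → P) (f : P → ℝ) : Prop :=
  ∀ β : ℝ, 0 ≤ β → β ≤ 1 → ∀ π ω : P, f (mix β π ω) = β * f π + (1 - β) * f ω

namespace IsMixAffine

variable {P : Type*} {mix : ℝ → P → P → P} {f g : P → ℝ}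

theorem comp {φ : P → P} (hf : IsMixAffine mix f)
    (hφ : ∀ β π ω, φ (mix β π ω) = mix β (φ π) (φ ω)) : IsMixAffine mix (f ∘ φ) := by
  intro β hβ₀ hβ₁ π ω
  simp only [Function.comp_apply, hφ, hf β hβ₀ hβ₁]

theorem exists_mix_eq (hg : IsMixAffine mix g) {π ω : P} {x : ℝ}
    (h₁ : g ω ≤ x) (h₂ : x ≤ g π) : ∃ t : ℝ, 0 ≤ t ∧ t ≤ 1 ∧ g (mix t π ω) = x := by
  set t := (x - g ω) / (g π - g ω)
  have ht₀ : 0 ≤ t := div_nonneg (by linarith) (by linarith)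
  have ht₁ : t ≤ 1 := div_le_one_of_le₀ (by linarith) (by linarith)
  -- if `g π = g ω` then `t = 0` and both sides vanish
  have ht : t * (g π - g ω) = x - g ω :=
    div_mul_cancel_of_imp fun h => by linarith [sub_eq_zero.mp h]
  refine ⟨t, ht₀, ht₁, ?_⟩
  rw [hg t ht₀ ht₁]
  linear_combination ht

end IsMixAffine

section OrderEquivalent

variable {P : Type*} {mix : ℝ → P → P → P} {f g : P → ℝ}

theorem eq_of_eq_of_gt_iff (hiff : ∀ π ω : P, f π > f ω ↔ g π > g ω) {π ω : P}
    (h : g π = g ω) : f π = f ω :=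
  le_antisymm (not_lt.mp fun hlt => ((hiff π ω).mp hlt).ne' h)
    (not_lt.mp fun hlt => ((hiff ω π).mp hlt).ne h)

theorem collinear_of_between (hf : IsMixAffine mix f) (hg : IsMixAffine mix g)
    (hiff : ∀ π ω : P, f π > f ω ↔ g π > g ω) {π ω l : P}
    (h₁ : g ω ≤ g l) (h₂ : g l ≤ g π) :
    (f l - f ω) * (g π - g ω) = (g l - g ω) * (f π - f ω) := by
  obtain ⟨t, ht₀, ht₁, hgt⟩ := hg.exists_mix_eq h₁ h₂
  have hft : f l = t * f π + (1 - t) * f ω := by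
    rw [← hf t ht₀ ht₁]
    exact eq_of_eq_of_gt_iff hiff hgt.symm
  rw [hg t ht₀ ht₁] at hgt
  rw [hft, ← hgt]
  ring

theorem exists_eq_add_mul_of_gt_iff (hf : IsMixAffine mix f) (hg : IsMixAffine mix g)
    (hiff : ∀ π ω : P, f π > f ω ↔ g π > g ω) :
    ∃ r c : ℝ, 0 < c ∧ ∀ l, f l = r + c * g l := by
  rcases isEmpty_or_nonempty P with hP | ⟨⟨π₀⟩⟩
  · exact ⟨0, 1, one_pos, isEmptyElim⟩
  by_cases hstrict : ∃ π ω : P, g π > g ω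
  swap
  · push Not at hstrict
    refine ⟨f π₀ - g π₀, 1, one_pos, fun l => ?_⟩
    have hl : g l = g π₀ := le_antisymm (hstrict l π₀) (hstrict π₀ l)
    rw [eq_of_eq_of_gt_iff hiff hl, hl]
    ring
  obtain ⟨π, ω, hgt⟩ := hstrict
  have hg_pos : 0 < g π - g ω := sub_pos.mpr hgt
  have hf_pos : 0 < f π - f ω := sub_pos.mpr ((hiff π ω).mpr hgt)
  refine ⟨f ω - (f π - f ω) / (g π - g ω) * g ω, (f π - f ω) / (g π - g ω),
    div_pos hf_pos hg_pos, fun l => ?_⟩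
  have key : (f l - f ω) * (g π - g ω) = (g l - g ω) * (f π - f ω) := by
    rcases le_total (g l) (g ω) with hlω | hωl
    · linear_combination -collinear_of_between hf hg hiff hlω hgt.le
    rcases le_total (g l) (g π) with hlπ | hπl
    · exact collinear_of_between hf hg hiff hωl hlπ
    · linear_combination -collinear_of_between hf hg hiff hgt.le hπl
  field_simp
  linear_combination key

end OrderEquivalent

theorem MixAffine.isMixAffine_vbar {S A P : Type*} [Fintype S] {mix : ℝ → P → P → P}
    {V : S → P → ℝ} (hV : MixAffine mix V) (T : S → A → S → ℝ) (s : S) (a : A) :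
    IsMixAffine mix (Vbar T V s a) := by
  intro β hβ₀ hβ₁ π ω
  simp only [Vbar, Finset.mul_sum, ← Finset.sum_add_distrib, hV _ β hβ₀ hβ₁]
  exact Finset.sum_congr rfl fun _ _ => by ring

theorem bellman_representation_general
    {S A P : Type*} [Fintype S]
    (T : S → A → S → ℝ)
    (act : A → P → P) (mix : ℝ → P → P → P)
    (hact_mix : ∀ (a : A) (β : ℝ) (π ω : P), act a (mix β π ω) = mix β (act a π) (act a ω))
    (V : S → P → ℝ) (haff : MixAffine mix V)
    (hdc : ∀ (s : S) (a : A) (π ω : P),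
        V s (act a π) > V s (act a ω) ↔ Vbar T V s a π > Vbar T V s a ω) :
    ∃ (R : S → A → ℝ) (γ : S → A → ℝ), (∀ s a, 0 < γ s a) ∧
      BellmanForm T act V R γ := by
  have hrep : ∀ s a, ∃ r c : ℝ, 0 < c ∧ ∀ π, V s (act a π) = r + c * Vbar T V s a π :=
    fun s a => exists_eq_add_mul_of_gt_iff (IsMixAffine.comp (haff s) (hact_mix a))
      (haff.isMixAffine_vbar T s a) (hdc s a)
  choose R γ hγ hR using hrep
  exact ⟨R, γ, hγ, hR⟩

/-- **Generalized Bellman representation.** A mixture-affine, dynamically consistent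
value function on prospects admits a reward function and a strictly positive discount
function satisfying the generalized Bellman equation. -/
theorem bellman_representation
    {S A P : Type*} [Fintype S] [Nonempty S] [Fintype A] [Nonempty A]
    (T : S → A → S → ℝ)
    (hT0 : ∀ s a s', 0 ≤ T s a s') (hT1 : ∀ s a, ∑ s', T s a s' = 1)
    (act : A → P → P) (mix : ℝ → P → P → P)
    (hact_mix : ∀ (a : A) (β : ℝ) (π ω : P), act a (mix β π ω) = mix β (act a π) (act a ω))
    (V : S → P → ℝ) (haff : MixAffine mix V)
    (hdc : ∀ (s : S) (a : A) (π ω : P),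
        V s (act a π) > V s (act a ω) ↔ Vbar T V s a π > Vbar T V s a ω) :
    ∃ (R : S → A → ℝ) (γ : S → A → ℝ), (∀ s a, 0 < γ s a) ∧
      BellmanForm T act V R γ :=
  bellman_representation_general T act mix hact_mix V haff hdc
end

section
/- Let E be a real vector space, C ⊆ E a nonempty convex set, I a finite index set, V_i : C → ℝ affine for each i ∈ I, and V_Σ : C → ℝ affine. Suppose Pareto indifference holds: for all p, q ∈ C, if V_i(p) = V_i(q) for all i ∈ I then V_Σ(p) = V_Σ(q). Then there exist a constant c ∈ ℝ and weights w : I → ℝ such that V_Σ(p) = c + Σ_{i∈I} w_i·V_i(p) for all p ∈ C. -/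
/-! Given points `zⱼ ∈ C` and weights `dⱼ` with `∑ dⱼ = 0`, normalising the positive and the
negative parts of `d` gives two barycentres in `C` at which every affine function differs by the
same positive multiple of `∑ dⱼ f(zⱼ)`. Pareto indifference therefore says that, on finitely
supported weightings of `C`, the functional `d ↦ ∑ dⱼ Vagg(zⱼ)` vanishes on the common kernel of
the total mass `d ↦ ∑ dⱼ` and of the functionals `d ↦ ∑ dⱼ Vᵢ(zⱼ)`. By duality it is a linear
combination of them, and evaluating at a Dirac weighting gives the constant and the weights. -/

open Finset

theorem Finset.sum_max_neg_zero_eq_of_sum_eq_zero {ι α : Type*} [AddCommGroup α] [LinearOrder α]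
    [IsOrderedAddMonoid α] {s : Finset ι} {d : ι → α} (hd : ∑ j ∈ s, d j = 0) :
    ∑ j ∈ s, max (-d j) 0 = ∑ j ∈ s, max (d j) 0 := by
  have hsplit := sum_congr rfl fun j (_ : j ∈ s) => (max_zero_sub_max_neg_zero_eq_self (d j)).symm
  rw [sum_sub_distrib, hd] at hsplit
  exact (sub_eq_zero.1 hsplit.symm).symm

section

variable {E : Type*} [AddCommGroup E] [Module ℝ E] {C : Set E} {f : E → ℝ}

def AffineOn (C : Set E) (f : E → ℝ) : Prop :=
  ∀ x ∈ C, ∀ y ∈ C, ∀ β : ℝ, 0 ≤ β → β ≤ 1 → f (β • x + (1 - β) • y) = β * f x + (1 - β) * f y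

namespace AffineOn

theorem map_add_smul (hf : AffineOn C f) {x y : E} (hx : x ∈ C) (hy : y ∈ C) {a b : ℝ}
    (ha : 0 ≤ a) (hb : 0 ≤ b) (hab : a + b = 1) : f (a • x + b • y) = a • f x + b • f y := by
  obtain rfl : b = 1 - a := by linarith
  exact hf x hx y hy a ha (by linarith)

theorem convexOn (hC : Convex ℝ C) (hf : AffineOn C f) : ConvexOn ℝ C f :=
  ⟨hC, fun _ hx _ hy _ _ ha hb hab => (hf.map_add_smul hx hy ha hb hab).le⟩

theorem concaveOn (hC : Convex ℝ C) (hf : AffineOn C f) : ConcaveOn ℝ C f :=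
  ⟨hC, fun _ hx _ hy _ _ ha hb hab => (hf.map_add_smul hx hy ha hb hab).ge⟩

variable {ι : Type*} {s : Finset ι} {w d : ι → ℝ} {z : ι → E}

theorem map_centerMass (hC : Convex ℝ C) (hf : AffineOn C f) (hw₀ : ∀ j ∈ s, 0 ≤ w j)
    (hw : 0 < ∑ j ∈ s, w j) (hz : ∀ j ∈ s, z j ∈ C) :
    f (s.centerMass w z) = s.centerMass w (f ∘ z) :=
  le_antisymm ((hf.convexOn hC).map_centerMass_le hw₀ hw hz)
    ((hf.concaveOn hC).le_map_centerMass hw₀ hw hz)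

theorem sub_map_centerMass (hC : Convex ℝ C) (hf : AffineOn C f) (hz : ∀ j ∈ s, z j ∈ C)
    (hd : ∑ j ∈ s, d j = 0) (hpos : 0 < ∑ j ∈ s, max (d j) 0) :
    f (s.centerMass (fun j => max (d j) 0) z) - f (s.centerMass (fun j => max (-d j) 0) z) =
      (∑ j ∈ s, max (d j) 0)⁻¹ * ∑ j ∈ s, d j * f (z j) := by
  have hneg := sum_max_neg_zero_eq_of_sum_eq_zero hd
  rw [hf.map_centerMass hC (fun _ _ => le_max_right _ _) hpos hz,
    hf.map_centerMass hC (fun _ _ => le_max_right _ _) (hneg ▸ hpos) hz]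
  simp only [centerMass, hneg, Function.comp_apply, smul_eq_mul, ← mul_sub, ← sum_sub_distrib,
    ← sub_mul, max_zero_sub_max_neg_zero_eq_self]

end AffineOn

theorem sum_mul_eq_zero_of_pareto {ι κ : Type*} (hC : Convex ℝ C) {V : ι → E → ℝ} {g : E → ℝ}
    (hV : ∀ i, AffineOn C (V i)) (hg : AffineOn C g)
    (pareto : ∀ p ∈ C, ∀ q ∈ C, (∀ i, V i p = V i q) → g p = g q)
    {s : Finset κ} {d : κ → ℝ} {z : κ → E} (hz : ∀ j ∈ s, z j ∈ C)
    (hd : ∑ j ∈ s, d j = 0) (hdV : ∀ i, ∑ j ∈ s, d j * V i (z j) = 0) :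
    ∑ j ∈ s, d j * g (z j) = 0 := by
  by_cases hnonpos : ∀ j ∈ s, d j ≤ 0
  · rw [sum_eq_zero_iff_of_nonpos hnonpos] at hd
    exact sum_eq_zero fun j hj => by rw [hd j hj, zero_mul]
  push Not at hnonpos
  obtain ⟨k, hk, hdk⟩ := hnonpos
  have hpos : 0 < ∑ j ∈ s, max (d j) 0 :=
    sum_pos' (fun _ _ => le_max_right _ _) ⟨k, hk, lt_max_of_lt_left hdk⟩
  have hCx := hC.centerMass_mem (fun j _ => le_max_right (d j) 0) hpos hz
  have hCy := hC.centerMass_mem (fun j _ => le_max_right (-d j) 0)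
    (sum_max_neg_zero_eq_of_sum_eq_zero hd ▸ hpos) hz
  have hg_eq := pareto _ hCx _ hCy fun i => sub_eq_zero.1 <| by
    rw [(hV i).sub_map_centerMass hC hz hd hpos, hdV i, mul_zero]
  rw [← sub_eq_zero, hg.sub_map_centerMass hC hz hd hpos] at hg_eq
  exact (mul_eq_zero.1 hg_eq).resolve_left (inv_ne_zero hpos.ne')

theorem exists_eq_sum_smul_of_sum_mul_eq_zero {X ι : Type*} [Fintype ι] (f : ι → X → ℝ)
    (g : X → ℝ) (h : ∀ (s : Finset X) (d : X → ℝ),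
      (∀ j, ∑ x ∈ s, d x * f j x = 0) → ∑ x ∈ s, d x * g x = 0) :
    ∃ a : ι → ℝ, g = ∑ j, a j • f j := by
  have hsum (u : X → ℝ) (d : X →₀ ℝ) :
      Finsupp.linearCombination ℝ u d = ∑ x ∈ d.support, d x * u x := by
    simp [Finsupp.linearCombination_apply, Finsupp.sum]
  have hker : ⨅ j, LinearMap.ker (Finsupp.linearCombination ℝ (f j)) ≤
      LinearMap.ker (Finsupp.linearCombination ℝ g) := fun d hd => by
    simp only [Submodule.mem_iInf, LinearMap.mem_ker, hsum] at hd ⊢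
    exact h _ _ hd
  obtain ⟨a, ha⟩ := (Submodule.mem_span_range_iff_exists_fun ℝ).1 (mem_span_of_iInf_ker_le_ker hker)
  refine ⟨a, funext fun x => ?_⟩
  simpa using (LinearMap.congr_fun ha (Finsupp.single x 1)).symm

end

theorem harsanyi_aggregation_general
    {E : Type*} [AddCommGroup E] [Module ℝ E] {C : Set E}
    (hconv : Convex ℝ C)
    {I : Type*} [Fintype I]
    (V : I → E → ℝ) (Vagg : E → ℝ)
    (hV : ∀ i, ∀ x ∈ C, ∀ y ∈ C, ∀ β : ℝ, 0 ≤ β → β ≤ 1 →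
        V i (β • x + (1 - β) • y) = β * V i x + (1 - β) * V i y)
    (hVagg : ∀ x ∈ C, ∀ y ∈ C, ∀ β : ℝ, 0 ≤ β → β ≤ 1 →
        Vagg (β • x + (1 - β) • y) = β * Vagg x + (1 - β) * Vagg y)
    (pareto : ∀ p ∈ C, ∀ q ∈ C, (∀ i, V i p = V i q) → Vagg p = Vagg q) :
    ∃ (c : ℝ) (w : I → ℝ), ∀ p ∈ C, Vagg p = c + ∑ i, w i * V i p := by
  obtain ⟨a, ha⟩ := exists_eq_sum_smul_of_sum_mul_eq_zero
    (fun j : Option I => j.elim (fun _ : C => 1) fun i p => V i p) (fun p => Vagg p)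
    fun s d hd => sum_mul_eq_zero_of_pareto hconv hV hVagg pareto (fun p _ => p.2)
      (by simpa using hd none) fun i => hd (some i)
  refine ⟨a none, fun i => a (some i), fun p hp => ?_⟩
  simpa [Fintype.sum_option] using congrFun ha ⟨p, hp⟩

/-- **Harsanyi's aggregation theorem.** If finitely many individual affine value
functions `V i` and an affine aggregate value function `Vagg` on a nonempty convex set
satisfy Pareto indifference, then the aggregate is a weighted sum of the individuals
plus a constant. -/
theorem harsanyi_aggregation
    {E : Type*} [AddCommGroup E] [Module ℝ E] {C : Set E}
    (hne : C.Nonempty) (hconv : Convex ℝ C)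
    {I : Type*} [Fintype I]
    (V : I → E → ℝ) (Vagg : E → ℝ)
    (hV : ∀ i, ∀ x ∈ C, ∀ y ∈ C, ∀ β : ℝ, 0 ≤ β → β ≤ 1 →
        V i (β • x + (1 - β) • y) = β * V i x + (1 - β) * V i y)
    (hVagg : ∀ x ∈ C, ∀ y ∈ C, ∀ β : ℝ, 0 ≤ β → β ≤ 1 →
        Vagg (β • x + (1 - β) • y) = β * Vagg x + (1 - β) * Vagg y)
    (pareto : ∀ p ∈ C, ∀ q ∈ C, (∀ i, V i p = V i q) → Vagg p = Vagg q) :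
    ∃ (c : ℝ) (w : I → ℝ), ∀ p ∈ C, Vagg p = c + ∑ i, w i * V i p :=
  harsanyi_aggregation_general hconv V Vagg hV hVagg pareto
end

section
/- Let E be a real vector space, C ⊆ E a nonempty convex set, I a finite index set, V_i : C → ℝ affine for each i ∈ I, and V_Σ : C → ℝ affine. Suppose Strong Pareto holds: for all p, q ∈ C, if V_i(p) ≥ V_i(q) for all i ∈ I then V_Σ(p) ≥ V_Σ(q), and if moreover V_j(p) > V_j(q) for some j ∈ I then V_Σ(p) > V_Σ(q). Suppose also richness: for every i ∈ I there exist p, q ∈ C with V_i(p) > V_i(q) and V_j(p) = V_j(q) for all j ≠ i. Then there exist c ∈ ℝ and weights w : I → ℝ with w_i > 0 for every i ∈ I such that V_Σ(p) = c + Σ_{i∈I} w_i·V_i(p) for all p ∈ C; moreover, every pair (c, w) satisfying this identity has w_i > 0 for all i ∈ I. -/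
/-!
By weak Pareto the aggregate value is a function of the profile of individual values, so the
image `S` of `C` under `p ↦ ((V i p)ᵢ, Vagg p)` is a convex subset of `(I → ℝ) × ℝ` that is a
graph. Every vector of the vector span of a convex set is `r • (a - b)` with `r ≥ 0` and `a`, `b`
in the set, so the vector span of `S` is again a graph, i.e. the graph of a linear map on a
subspace of `I → ℝ`; extending it to all of `I → ℝ` gives the weights. A pair of points that
differ only in `V i`, as richness provides, has a strictly larger aggregate by strict Pareto,
which forces `w i > 0`.
-/

section

variable {𝕜 M : Type*} [Field 𝕜] [LinearOrder 𝕜] [IsStrictOrderedRing 𝕜]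
  [AddCommGroup M] [Module 𝕜 M]

theorem Convex.exists_smul_sub_eq_of_mem_vectorSpan {S : Set M} (hS : Convex 𝕜 S)
    (hne : S.Nonempty) {v : M} (hv : v ∈ vectorSpan 𝕜 S) :
    ∃ r : 𝕜, 0 ≤ r ∧ ∃ a ∈ S, ∃ b ∈ S, v = r • (a - b) := by
  rw [vectorSpan_def] at hv
  induction hv using Submodule.span_induction with
  | mem v hv =>
    obtain ⟨a, ha, b, hb, rfl⟩ := hv
    exact ⟨1, zero_le_one, a, ha, b, hb, (one_smul 𝕜 _).symm⟩
  | zero =>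
    obtain ⟨a, ha⟩ := hne
    exact ⟨0, le_rfl, a, ha, a, ha, (zero_smul 𝕜 _).symm⟩
  | add v₁ v₂ _ _ ih₁ ih₂ =>
    obtain ⟨r₁, hr₁, a₁, ha₁, b₁, hb₁, rfl⟩ := ih₁
    obtain ⟨r₂, hr₂, a₂, ha₂, b₂, hb₂, rfl⟩ := ih₂
    rcases (add_nonneg hr₁ hr₂).eq_or_lt with hr | hr
    · obtain ⟨rfl, rfl⟩ : r₁ = 0 ∧ r₂ = 0 := ⟨by linarith, by linarith⟩
      exact ⟨0, le_rfl, a₁, ha₁, b₁, hb₁, by simp⟩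
    have hw : r₁ / (r₁ + r₂) + r₂ / (r₁ + r₂) = 1 := by field_simp
    refine ⟨r₁ + r₂, hr.le,
      _, hS ha₁ ha₂ (div_nonneg hr₁ hr.le) (div_nonneg hr₂ hr.le) hw,
      _, hS hb₁ hb₂ (div_nonneg hr₁ hr.le) (div_nonneg hr₂ hr.le) hw, ?_⟩
    simp only [smul_sub, smul_add, smul_smul, mul_div_cancel₀ _ hr.ne']
    abel
  | smul t v _ ih =>
    obtain ⟨r, hr, a, ha, b, hb, rfl⟩ := ih
    rcases le_total 0 t with ht | ht
    · exact ⟨t * r, mul_nonneg ht hr, a, ha, b, hb, by rw [smul_smul]⟩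
    · refine ⟨-t * r, mul_nonneg (neg_nonneg.mpr ht) hr, b, hb, a, ha, ?_⟩
      rw [smul_smul, ← neg_sub a b, smul_neg, neg_mul, neg_smul, neg_neg]

variable {F G : Type*} [AddCommGroup F] [Module 𝕜 F] [AddCommGroup G] [Module 𝕜 G]

theorem Convex.exists_linearMap_of_isGraph {S : Set (F × G)} (hS : Convex 𝕜 S)
    (hgraph : ∀ x ∈ S, ∀ y ∈ S, x.1 = y.1 → x.2 = y.2) :
    ∃ (ℓ : F →ₗ[𝕜] G) (c : G), ∀ x ∈ S, x.2 = ℓ x.1 + c := by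
  rcases S.eq_empty_or_nonempty with rfl | ⟨y, hy⟩
  · exact ⟨0, 0, by simp⟩
  set K := vectorSpan 𝕜 S
  have hinj : LinearMap.ker ((LinearMap.fst 𝕜 F G).domRestrict K) = ⊥ := by
    refine LinearMap.ker_eq_bot'.mpr fun ⟨v, hv⟩ hv₁ => ?_
    obtain ⟨r, -, a, ha, b, hb, rfl⟩ := hS.exists_smul_sub_eq_of_mem_vectorSpan ⟨y, hy⟩ hv
    have h₁ : r • (a.1 - b.1) = 0 := hv₁
    rcases smul_eq_zero.mp h₁ with rfl | hab₁
    · simp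
    have hab : a = b := Prod.ext (sub_eq_zero.mp hab₁) (hgraph a ha b hb (sub_eq_zero.mp hab₁))
    simp [hab]
  obtain ⟨g, hg⟩ := LinearMap.exists_leftInverse_of_injective _ hinj
  let ℓ := (LinearMap.snd 𝕜 F G).domRestrict K ∘ₗ g
  refine ⟨ℓ, y.2 - ℓ y.1, fun x hx => ?_⟩
  have hxy := congr_arg Prod.snd (congr_arg Subtype.val
    (LinearMap.congr_fun hg ⟨x - y, vsub_mem_vectorSpan 𝕜 hx hy⟩))
  simp only [LinearMap.comp_apply, LinearMap.domRestrict_apply, LinearMap.fst_apply,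
    LinearMap.id_apply, Prod.snd_sub, map_sub, Submodule.coe_sub] at hxy
  simp only [ℓ, LinearMap.comp_apply, LinearMap.domRestrict_apply, LinearMap.snd_apply]
  linear_combination (norm := module) -hxy

end

theorem pos_of_sum_mul_lt_sum_mul_of_eq_of_ne {I : Type*} [Fintype I] {w a b : I → ℝ} {i : I}
    (hi : b i < a i) (hne : ∀ j ≠ i, a j = b j) (h : ∑ j, w j * b j < ∑ j, w j * a j) :
    0 < w i := by
  have hdiff : ∑ j, w j * a j - ∑ j, w j * b j = w i * (a i - b i) := by
    rw [← Finset.sum_sub_distrib, mul_sub]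
    exact Fintype.sum_eq_single i fun j hj => by rw [hne j hj, sub_self]
  exact pos_of_mul_pos_left (by linarith) (sub_pos.mpr hi).le

theorem harsanyi_aggregation_strong_pareto_general
    {E : Type*} [AddCommGroup E] [Module ℝ E] {C : Set E}
    (hconv : Convex ℝ C)
    {I : Type*} [Fintype I]
    (V : I → E → ℝ) (Vagg : E → ℝ)
    (hV : ∀ i, ∀ x ∈ C, ∀ y ∈ C, ∀ β : ℝ, 0 ≤ β → β ≤ 1 →
        V i (β • x + (1 - β) • y) = β * V i x + (1 - β) * V i y)
    (hVagg : ∀ x ∈ C, ∀ y ∈ C, ∀ β : ℝ, 0 ≤ β → β ≤ 1 →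
        Vagg (β • x + (1 - β) • y) = β * Vagg x + (1 - β) * Vagg y)
    (strongParetoWeak : ∀ p ∈ C, ∀ q ∈ C, (∀ i, V i q ≤ V i p) → Vagg q ≤ Vagg p)
    (strongParetoStrict : ∀ p ∈ C, ∀ q ∈ C, (∀ i, V i q ≤ V i p) →
        (∃ j, V j q < V j p) → Vagg q < Vagg p)
    (richness : ∀ i, ∃ p ∈ C, ∃ q ∈ C, V i q < V i p ∧ ∀ j, j ≠ i → V j p = V j q) :
    (∃ (c : ℝ) (w : I → ℝ), (∀ i, 0 < w i) ∧
        ∀ p ∈ C, Vagg p = c + ∑ i, w i * V i p) ∧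
    (∀ (c : ℝ) (w : I → ℝ), (∀ p ∈ C, Vagg p = c + ∑ i, w i * V i p) →
        ∀ i, 0 < w i) := by
  have weights_pos (c : ℝ) (w : I → ℝ) (hrep : ∀ p ∈ C, Vagg p = c + ∑ i, w i * V i p)
      (i : I) : 0 < w i := by
    obtain ⟨p, hp, q, hq, hlt, heq⟩ := richness i
    have hle (j : I) : V j q ≤ V j p :=
      (eq_or_ne j i).elim (fun hj => hj ▸ hlt.le) fun hj => (heq j hj).ge
    have hagg := strongParetoStrict p hp q hq hle ⟨i, hlt⟩
    rw [hrep p hp, hrep q hq] at hagg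
    exact pos_of_sum_mul_lt_sum_mul_of_eq_of_ne hlt heq (by linarith)
  refine ⟨?_, weights_pos⟩
  set S : Set ((I → ℝ) × ℝ) := (fun p => (fun i => V i p, Vagg p)) '' C
  have hS : Convex ℝ S := by
    rintro _ ⟨x, hx, rfl⟩ _ ⟨y, hy, rfl⟩ a b ha hb hab
    obtain rfl : b = 1 - a := by linarith
    refine ⟨a • x + (1 - a) • y, hconv hx hy ha hb hab, ?_⟩
    exact Prod.ext (funext fun i => hV i x hx y hy a ha (by linarith))
      (hVagg x hx y hy a ha (by linarith))
  have hgraph : ∀ x ∈ S, ∀ y ∈ S, x.1 = y.1 → x.2 = y.2 := by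
    rintro _ ⟨p, hp, rfl⟩ _ ⟨q, hq, rfl⟩ h
    have hV_eq (i : I) : V i p = V i q := congr_fun h i
    exact le_antisymm (strongParetoWeak q hq p hp fun i => (hV_eq i).le)
      (strongParetoWeak p hp q hq fun i => (hV_eq i).ge)
  classical
  obtain ⟨ℓ, c, hℓ⟩ := hS.exists_linearMap_of_isGraph hgraph
  have hrep (p : E) (hp : p ∈ C) :
      Vagg p = c + ∑ i, (ℓ fun j => if i = j then 1 else 0) * V i p := by
    rw [show Vagg p = _ from hℓ _ ⟨p, hp, rfl⟩, ℓ.pi_apply_eq_sum_univ, add_comm]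
    simp only [smul_eq_mul, mul_comm]
  exact ⟨c, _, weights_pos c _ hrep, hrep⟩

/-- **Harsanyi aggregation with Strong Pareto.** Under Strong Pareto and a richness
condition, the affine aggregate of finitely many affine individual value functions on a
nonempty convex set is a weighted sum plus a constant with strictly positive weights;
moreover every such representation has strictly positive weights. -/
theorem harsanyi_aggregation_strong_pareto
    {E : Type*} [AddCommGroup E] [Module ℝ E] {C : Set E}
    (hne : C.Nonempty) (hconv : Convex ℝ C)
    {I : Type*} [Fintype I]
    (V : I → E → ℝ) (Vagg : E → ℝ)
    (hV : ∀ i, ∀ x ∈ C, ∀ y ∈ C, ∀ β : ℝ, 0 ≤ β → β ≤ 1 →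
        V i (β • x + (1 - β) • y) = β * V i x + (1 - β) * V i y)
    (hVagg : ∀ x ∈ C, ∀ y ∈ C, ∀ β : ℝ, 0 ≤ β → β ≤ 1 →
        Vagg (β • x + (1 - β) • y) = β * Vagg x + (1 - β) * Vagg y)
    (strongParetoWeak : ∀ p ∈ C, ∀ q ∈ C, (∀ i, V i q ≤ V i p) → Vagg q ≤ Vagg p)
    (strongParetoStrict : ∀ p ∈ C, ∀ q ∈ C, (∀ i, V i q ≤ V i p) →
        (∃ j, V j q < V j p) → Vagg q < Vagg p)
    (richness : ∀ i, ∃ p ∈ C, ∃ q ∈ C, V i q < V i p ∧ ∀ j, j ≠ i → V j p = V j q) :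
    (∃ (c : ℝ) (w : I → ℝ), (∀ i, 0 < w i) ∧
        ∀ p ∈ C, Vagg p = c + ∑ i, w i * V i p) ∧
    (∀ (c : ℝ) (w : I → ℝ), (∀ p ∈ C, Vagg p = c + ∑ i, w i * V i p) →
        ∀ i, 0 < w i) :=
  harsanyi_aggregation_strong_pareto_general hconv V Vagg hV hVagg strongParetoWeak
    strongParetoStrict richness
end

section
/- Let S, A, T, 𝒫 be as in the MDP context. Let V1, V2, V_Σ : S × 𝒫 → ℝ be mixture-affine and satisfy the generalized Bellman form with reward/discount pairs (R1, γ1), (R2, γ2), (R_Σ, γ_Σ) respectively. Suppose there exist c ∈ ℝ and weights w1 ≠ 0, w2 ≠ 0 with V_Σ(s,Π) = c + w1·V1(s,Π) + w2·V2(s,Π) for all s ∈ S and Π ∈ 𝒫. Fix (s,a) ∈ S × A and suppose the conflict condition holds for (V1, V2) at (s,a). Then γ1(s,a) = γ2(s,a) = γ_Σ(s,a). -/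
open scoped BigOperators

/-!
Evaluating `Vagg s (act a π)` once through its own Bellman form and once through the
aggregation of the Bellman forms of `V1` and `V2` shows that
`w1 (γ1 - γagg) V̄1(s,a,π) + w2 (γ2 - γagg) V̄2(s,a,π)` does not depend on `π`.
The conflict condition provides three policies whose points `(V̄1, V̄2)` are affinely
independent (this is what `β1 ≠ β2` says), so a linear functional that is constant on them
vanishes. Hence both coefficients are zero, and `w1, w2 ≠ 0` gives the equal discounts.
-/

open Finset

theorem Vbar_of_affine_combination {S A P : Type*} [Fintype S] {T : S → A → S → ℝ}
    {s : S} {a : A} (hT : ∑ s', T s a s' = 1) {V V1 V2 : S → P → ℝ} {c w1 w2 : ℝ}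
    (hV : ∀ s' π, V s' π = c + w1 * V1 s' π + w2 * V2 s' π) (π : P) :
    Vbar T V s a π = c + w1 * Vbar T V1 s a π + w2 * Vbar T V2 s a π := by
  simp only [Vbar, hV, mul_add, sum_add_distrib, mul_left_comm (T s a _), ← mul_sum, ← sum_mul,
    hT]
  ring

theorem discount_gap_combination_eq {S A P : Type*} [Fintype S] {T : S → A → S → ℝ}
    {act : A → P → P} {V1 V2 Vagg : S → P → ℝ} {R1 R2 Ragg γ1 γ2 γagg : S → A → ℝ}
    (hB1 : BellmanForm T act V1 R1 γ1) (hB2 : BellmanForm T act V2 R2 γ2)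
    (hBagg : BellmanForm T act Vagg Ragg γagg) {c w1 w2 : ℝ}
    (hagg : ∀ s π, Vagg s π = c + w1 * V1 s π + w2 * V2 s π)
    {s : S} {a : A} (hT : ∑ s', T s a s' = 1) (π : P) :
    w1 * (γ1 s a - γagg s a) * Vbar T V1 s a π + w2 * (γ2 s a - γagg s a) * Vbar T V2 s a π
      = Ragg s a + γagg s a * c - c - w1 * R1 s a - w2 * R2 s a := by
  have hown := hBagg s a π
  have hsplit := hagg s (act a π)
  rw [Vbar_of_affine_combination hT hagg] at hown
  rw [hB1, hB2, hown] at hsplit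
  linear_combination -hsplit

theorem eq_zero_of_div_ne_of_combinations_eq_zero {p₁ l₁ o₁ p₂ l₂ o₂ x y : ℝ}
    (h₁ : p₁ - o₁ ≠ 0) (h₂ : p₂ - o₂ ≠ 0)
    (hβ : (l₁ - o₁) / (p₁ - o₁) ≠ (l₂ - o₂) / (p₂ - o₂))
    (hp : x * (p₁ - o₁) + y * (p₂ - o₂) = 0) (hl : x * (l₁ - o₁) + y * (l₂ - o₂) = 0) :
    x = 0 ∧ y = 0 := by
  have hdet : (l₁ - o₁) * (p₂ - o₂) - (l₂ - o₂) * (p₁ - o₁) ≠ 0 :=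
    fun h => hβ ((div_eq_div_iff h₁ h₂).mpr (sub_eq_zero.mp h))
  constructor
  · refine (mul_eq_zero.mp ?_).resolve_right hdet
    linear_combination (p₂ - o₂) * hl - (l₂ - o₂) * hp
  · refine (mul_eq_zero.mp ?_).resolve_right hdet
    linear_combination (l₁ - o₁) * hp - (p₁ - o₁) * hl

theorem Conflict.eq_zero_of_forall_combination_eq {S A P : Type*} [Fintype S]
    {T : S → A → S → ℝ} {V1 V2 : S → P → ℝ} {s : S} {a : A} (hconf : Conflict T V1 V2 s a)
    {x y K : ℝ} (hK : ∀ π, x * Vbar T V1 s a π + y * Vbar T V2 s a π = K) :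
    x = 0 ∧ y = 0 := by
  obtain ⟨π, ω, l, h1πl, h1lω, h2ωl, h2lπ, hβ⟩ := hconf
  refine eq_zero_of_div_ne_of_combinations_eq_zero (by linarith) (by linarith) hβ ?_ ?_
  · linear_combination hK π - hK ω
  · linear_combination hK l - hK ω

theorem discounts_equal_of_markovian_aggregation_general
    {S A P : Type*} [Fintype S]
    (T : S → A → S → ℝ)
    (hT1 : ∀ s a, ∑ s', T s a s' = 1)
    (act : A → P → P)
    (V1 V2 Vagg : S → P → ℝ)
    (R1 R2 Ragg γ1 γ2 γagg : S → A → ℝ)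
    (hB1 : BellmanForm T act V1 R1 γ1)
    (hB2 : BellmanForm T act V2 R2 γ2)
    (hBagg : BellmanForm T act Vagg Ragg γagg)
    (c w1 w2 : ℝ) (hw1 : w1 ≠ 0) (hw2 : w2 ≠ 0)
    (hagg : ∀ (s : S) (π : P), Vagg s π = c + w1 * V1 s π + w2 * V2 s π)
    (s : S) (a : A) (hconf : Conflict T V1 V2 s a) :
    γ1 s a = γ2 s a ∧ γ2 s a = γagg s a := by
  obtain ⟨h1, h2⟩ := hconf.eq_zero_of_forall_combination_eq
    (discount_gap_combination_eq hB1 hB2 hBagg hagg (hT1 s a))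
  have hγ1 : γ1 s a = γagg s a := sub_eq_zero.mp ((mul_eq_zero.mp h1).resolve_left hw1)
  have hγ2 : γ2 s a = γagg s a := sub_eq_zero.mp ((mul_eq_zero.mp h2).resolve_left hw2)
  exact ⟨hγ1.trans hγ2.symm, hγ2⟩

/-- **Equal discounts under Markovian aggregation (Theorem 4, core computation).**
If `Vagg = c + w1·V1 + w2·V2` with nonzero weights, all three value functions are
mixture-affine and satisfy generalized Bellman forms, and the conflict condition holds
for `(V1, V2)` at `(s, a)`, then all three discounts agree at `(s, a)`. -/
theorem discounts_equal_of_markovian_aggregation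
    {S A P : Type*} [Fintype S] [Nonempty S] [Fintype A] [Nonempty A]
    (T : S → A → S → ℝ)
    (hT0 : ∀ s a s', 0 ≤ T s a s') (hT1 : ∀ s a, ∑ s', T s a s' = 1)
    (act : A → P → P) (mix : ℝ → P → P → P)
    (hact_mix : ∀ (a : A) (β : ℝ) (π ω : P), act a (mix β π ω) = mix β (act a π) (act a ω))
    (V1 V2 Vagg : S → P → ℝ)
    (haff1 : MixAffine mix V1) (haff2 : MixAffine mix V2) (haffagg : MixAffine mix Vagg)
    (R1 R2 Ragg γ1 γ2 γagg : S → A → ℝ)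
    (hB1 : BellmanForm T act V1 R1 γ1)
    (hB2 : BellmanForm T act V2 R2 γ2)
    (hBagg : BellmanForm T act Vagg Ragg γagg)
    (c w1 w2 : ℝ) (hw1 : w1 ≠ 0) (hw2 : w2 ≠ 0)
    (hagg : ∀ (s : S) (π : P), Vagg s π = c + w1 * V1 s π + w2 * V2 s π)
    (s : S) (a : A) (hconf : Conflict T V1 V2 s a) :
    γ1 s a = γ2 s a ∧ γ2 s a = γagg s a :=
  discounts_equal_of_markovian_aggregation_general T hT1 act V1 V2 Vagg R1 R2 Ragg γ1 γ2 γagg hB1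
    hB2 hBagg c w1 w2 hw1 hw2 hagg s a hconf
end

section
/- Let S, A, T, 𝒫 be as in the MDP context, I a finite index set, and let V_i : S × 𝒫 → ℝ (i ∈ I) and V_Σ : S × 𝒫 → ℝ be mixture-affine, satisfying the generalized Bellman form with reward/discount pairs (R_i, γ_i) and (R_Σ, γ_Σ) respectively, with γ_Σ(s,a) > 0. Fix s ∈ S and weights w_i(s) ∈ ℝ, and suppose V_Σ(s, a·Π) = Σ_{i∈I} w_i(s)·V_i(s, a·Π) for all a ∈ A and Π ∈ 𝒫. Define w_i(sa) := w_i(s)·γ_i(s,a). Then for every a ∈ A and Π ∈ 𝒫: γ_Σ(s,a)·V̄_Σ(s,a,Π) = (Σ_{i∈I} w_i(s)·R_i(s,a) − R_Σ(s,a)) + Σ_{i∈I} w_i(sa)·V̄_i(s,a,Π). In particular, Π ↦ V̄_Σ(s,a,Π) is a positive affine transformation of Π ↦ Σ_{i∈I} w_i(sa)·V̄_i(s,a,Π). -/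
open scoped BigOperators

theorem BellmanForm.sum_mul_apply_act {S A P I : Type*} [Fintype S] [Fintype I]
    {T : S → A → S → ℝ} {act : A → P → P} {V : I → S → P → ℝ} {R γ : I → S → A → ℝ}
    (hB : ∀ i, BellmanForm T act (V i) (R i) (γ i)) (w : I → ℝ) (s : S) (a : A) (π : P) :
    ∑ i, w i * V i s (act a π) =
      ∑ i, w i * R i s a + ∑ i, (w i * γ i s a) * Vbar T (V i) s a π := by
  simp only [hB _ s a π, mul_add, Finset.sum_add_distrib, mul_assoc]

theorem BellmanForm.mul_Vbar_eq_of_eq_sum_mul {S A P I : Type*} [Fintype S] [Fintype I]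
    {T : S → A → S → ℝ} {act : A → P → P} {V : I → S → P → ℝ} {R γ : I → S → A → ℝ}
    {Vagg : S → P → ℝ} {Ragg γagg : S → A → ℝ}
    (hBagg : BellmanForm T act Vagg Ragg γagg) (hB : ∀ i, BellmanForm T act (V i) (R i) (γ i))
    {w : I → ℝ} {s : S} {a : A} {π : P}
    (hagg : Vagg s (act a π) = ∑ i, w i * V i s (act a π)) :
    γagg s a * Vbar T Vagg s a π =
      ((∑ i, w i * R i s a) - Ragg s a) + ∑ i, (w i * γ i s a) * Vbar T (V i) s a π := by
  rw [hBagg s a π, BellmanForm.sum_mul_apply_act hB] at hagg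
  linarith

theorem exists_pos_affine_of_mul_eq_add {P : Type*} {f g : P → ℝ} {c d : ℝ} (hc : 0 < c)
    (h : ∀ π, c * f π = d + g π) : ∃ κ c' : ℝ, 0 < κ ∧ ∀ π, f π = κ * g π + c' :=
  ⟨c⁻¹, c⁻¹ * d, inv_pos.mpr hc, fun π => by
    rw [← mul_add, add_comm, ← h π, inv_mul_cancel_left₀ hc.ne']⟩

theorem discounted_weight_update_general
    {S A P I : Type*} [Fintype S] [Fintype I]
    (T : S → A → S → ℝ)
    (act : A → P → P)
    (V : I → S → P → ℝ) (Vagg : S → P → ℝ)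
    (R : I → S → A → ℝ) (γ : I → S → A → ℝ) (Ragg γagg : S → A → ℝ)
    (hB : ∀ i, BellmanForm T act (V i) (R i) (γ i))
    (hBagg : BellmanForm T act Vagg Ragg γagg)
    (hγaggpos : ∀ s a, 0 < γagg s a)
    (s : S) (w : I → ℝ)
    (hagg : ∀ (a : A) (π : P), Vagg s (act a π) = ∑ i, w i * V i s (act a π)) :
    (∀ (a : A) (π : P),
        γagg s a * Vbar T Vagg s a π =
          ((∑ i, w i * R i s a) - Ragg s a) +
            ∑ i, (w i * γ i s a) * Vbar T (V i) s a π) ∧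
    (∀ a : A, ∃ κ c' : ℝ, 0 < κ ∧ ∀ π : P,
        Vbar T Vagg s a π = κ * (∑ i, (w i * γ i s a) * Vbar T (V i) s a π) + c') := by
  have key : ∀ (a : A) (π : P), γagg s a * Vbar T Vagg s a π =
      ((∑ i, w i * R i s a) - Ragg s a) + ∑ i, (w i * γ i s a) * Vbar T (V i) s a π :=
    fun _ _ => hBagg.mul_Vbar_eq_of_eq_sum_mul hB (hagg _ _)
  exact ⟨key, fun a => exists_pos_affine_of_mul_eq_add (hγaggpos s a) (key a)⟩

/-- **Discounted-weight aggregation identity (toward Theorem 5).** If the aggregate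
`Vagg` equals the weighted sum `Σ_i w_i(s)·V_i` on prospects prefixed at state `s`, all
value functions are mixture-affine with generalized Bellman forms, and `γagg > 0`, then
`γagg(s,a)·V̄agg(s,a,·)` equals a constant plus `Σ_i w_i(sa)·V̄_i(s,a,·)` with the
updated weights `w_i(sa) := w_i(s)·γ_i(s,a)`; in particular `V̄agg(s,a,·)` is a positive
affine transformation of `Σ_i w_i(sa)·V̄_i(s,a,·)`. -/
theorem discounted_weight_update
    {S A P I : Type*} [Fintype S] [Nonempty S] [Fintype A] [Nonempty A] [Fintype I]
    (T : S → A → S → ℝ)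
    (hT0 : ∀ s a s', 0 ≤ T s a s') (hT1 : ∀ s a, ∑ s', T s a s' = 1)
    (act : A → P → P) (mix : ℝ → P → P → P)
    (hact_mix : ∀ (a : A) (β : ℝ) (π ω : P), act a (mix β π ω) = mix β (act a π) (act a ω))
    (V : I → S → P → ℝ) (Vagg : S → P → ℝ)
    (haff : ∀ i, MixAffine mix (V i)) (haffagg : MixAffine mix Vagg)
    (R : I → S → A → ℝ) (γ : I → S → A → ℝ) (Ragg γagg : S → A → ℝ)
    (hB : ∀ i, BellmanForm T act (V i) (R i) (γ i))
    (hBagg : BellmanForm T act Vagg Ragg γagg)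
    (hγaggpos : ∀ s a, 0 < γagg s a)
    (s : S) (w : I → ℝ)
    (hagg : ∀ (a : A) (π : P), Vagg s (act a π) = ∑ i, w i * V i s (act a π)) :
    (∀ (a : A) (π : P),
        γagg s a * Vbar T Vagg s a π =
          ((∑ i, w i * R i s a) - Ragg s a) +
            ∑ i, (w i * γ i s a) * Vbar T (V i) s a π) ∧
    (∀ a : A, ∃ κ c' : ℝ, 0 < κ ∧ ∀ π : P,
        Vbar T Vagg s a π = κ * (∑ i, (w i * γ i s a) * Vbar T (V i) s a π) + c') :=
  discounted_weight_update_general T act V Vagg R γ Ragg γagg hB hBagg hγaggpos s w hagg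
end

section
/- Let S, A, T, 𝒫 be as in the MDP context, I a finite index set, and for each i ∈ I let V_i : S × 𝒫 → ℝ be mixture-affine and satisfy the generalized Bellman form with reward R_i and discount γ_i. Let γ_Σ : S × A → ℝ with γ_Σ(s,a) > 0 for all (s,a), and let initial weights w_i ∈ ℝ be given. Define weights on histories (finite lists of state–action pairs) by w_i([]) := w_i and w_i(h ++ [(s,a)]) := w_i(h)·γ_i(s,a)/γ_Σ(s,a), and define V_Σ(h, s, Π) := Σ_{i∈I} w_i(h)·V_i(s, Π). Then: (a) for all h, s, a, Π: V_Σ(h, s, a·Π) = Σ_{i∈I} w_i(h)·R_i(s,a) + γ_Σ(s,a)·E_{s'~T(s,a)}[V_Σ(h ++ [(s,a)], s', Π)], i.e., V_Σ satisfies a generalized Bellman recursion on the history-augmented state space with discount γ_Σ and reward R_Σ(h,s,a) := Σ_{i∈I} w_i(h)·R_i(s,a); (b) consequently V_Σ is dynamically consistent: V_Σ(h, s, a·Π) > V_Σ(h, s, a·Ω) if and only if E_{s'~T(s,a)}[V_Σ(h ++ [(s,a)], s', Π)] > E_{s'~T(s,a)}[V_Σ(h ++ [(s,a)], s', Ω)];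 and (c) V_Σ is Pareto indifferent at every history: if V_i(s, Π) = V_i(s, Ω) for all i ∈ I then V_Σ(h, s, Π) = V_Σ(h, s, Ω). -/
open scoped BigOperators

/-- History-dependent aggregation weight: `w_i([]) = w_i` and
`w_i(h ++ [(s,a)]) = w_i(h)·γ_i(s,a)/γagg(s,a)`. -/
noncomputable def histWeight {S A I : Type*}
    (γ : I → S → A → ℝ) (γagg : S → A → ℝ) (w0 : I → ℝ)
    (i : I) (h : List (S × A)) : ℝ :=
  w0 i * (h.map (fun p => γ i p.1 p.2 / γagg p.1 p.2)).prod

/-- History-augmented aggregate value `Vagg(h, s, π) := Σ_i w_i(h)·V_i(s, π)`. -/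
noncomputable def aggValue {S A P I : Type*} [Fintype I]
    (γ : I → S → A → ℝ) (γagg : S → A → ℝ) (w0 : I → ℝ)
    (V : I → S → P → ℝ) (h : List (S × A)) (s : S) (π : P) : ℝ :=
  ∑ i, histWeight γ γagg w0 i h * V i s π

/-! The weights are built so that `w_i(h ++ [(s,a)]) · γ_Σ(s,a) = w_i(h) · γ_i(s,a)`: when each
`V_i(s, a·Π)` is expanded by its own Bellman form, the discount `γ_i` is absorbed into the updated
weight and only the common discount `γ_Σ` is left in front of the continuation value. Since
`γ_Σ > 0`, comparing two continuations is then the same as comparing the current values, and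
Pareto indifference holds because `V_Σ` is a linear combination of the `V_i`. -/

section Aggregation

variable {S A P I : Type*} {T : S → A → S → ℝ}
  {V : I → S → P → ℝ} {γ : I → S → A → ℝ} {γagg : S → A → ℝ} {w0 : I → ℝ}

theorem Vbar_aggValue [Fintype S] [Fintype I] (h : List (S × A)) (s : S) (a : A) (π : P) :
    Vbar T (aggValue γ γagg w0 V h) s a π = ∑ i, histWeight γ γagg w0 i h * Vbar T (V i) s a π := by
  simp only [Vbar, aggValue, Finset.mul_sum]
  rw [Finset.sum_comm]
  exact Finset.sum_congr rfl fun _ _ => Finset.sum_congr rfl fun _ _ => by ring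

theorem histWeight_append_singleton (i : I) (h : List (S × A)) (s : S) (a : A) :
    histWeight γ γagg w0 i (h ++ [(s, a)]) = histWeight γ γagg w0 i h * (γ i s a / γagg s a) := by
  simp [histWeight, mul_assoc]

theorem aggValue_act [Fintype S] [Fintype I] {act : A → P → P} {R : I → S → A → ℝ}
    (hB : ∀ i, BellmanForm T act (V i) (R i) (γ i)) (h : List (S × A)) {s : S} {a : A}
    (hγagg : γagg s a ≠ 0) (π : P) :
    aggValue γ γagg w0 V h s (act a π) =
      (∑ i, histWeight γ γagg w0 i h * R i s a) +
        γagg s a * Vbar T (aggValue γ γagg w0 V (h ++ [(s, a)])) s a π := by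
  have hcont : γagg s a * Vbar T (aggValue γ γagg w0 V (h ++ [(s, a)])) s a π =
      ∑ i, histWeight γ γagg w0 i h * (γ i s a * Vbar T (V i) s a π) := by
    rw [Vbar_aggValue, Finset.mul_sum]
    refine Finset.sum_congr rfl fun i _ => ?_
    rw [histWeight_append_singleton]
    field_simp
  rw [hcont, ← Finset.sum_add_distrib, aggValue]
  exact Finset.sum_congr rfl fun i _ => by rw [hB i]; ring

theorem aggValue_act_lt_act_iff [Fintype S] [Fintype I] {act : A → P → P} {R : I → S → A → ℝ}
    (hB : ∀ i, BellmanForm T act (V i) (R i) (γ i)) (h : List (S × A)) {s : S} {a : A}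
    (hγagg : 0 < γagg s a) (π ω : P) :
    aggValue γ γagg w0 V h s (act a ω) < aggValue γ γagg w0 V h s (act a π) ↔
      Vbar T (aggValue γ γagg w0 V (h ++ [(s, a)])) s a ω <
        Vbar T (aggValue γ γagg w0 V (h ++ [(s, a)])) s a π := by
  rw [aggValue_act hB h hγagg.ne', aggValue_act hB h hγagg.ne', add_lt_add_iff_left,
    mul_lt_mul_iff_of_pos_left hγagg]

theorem aggValue_eq_of_forall_eq [Fintype I] (h : List (S × A)) {s : S} {π ω : P}
    (hV : ∀ i, V i s π = V i s ω) :
    aggValue γ γagg w0 V h s π = aggValue γ γagg w0 V h s ω :=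
  Finset.sum_congr rfl fun i _ => by rw [hV i]

end Aggregation

theorem possibility_of_nonmarkovian_aggregation_general
    {S A P I : Type*} [Fintype S] [Fintype I]
    (T : S → A → S → ℝ)
    (act : A → P → P)
    (V : I → S → P → ℝ)
    (R : I → S → A → ℝ) (γ : I → S → A → ℝ)
    (hB : ∀ i, BellmanForm T act (V i) (R i) (γ i))
    (γagg : S → A → ℝ) (hγaggpos : ∀ s a, 0 < γagg s a)
    (w0 : I → ℝ) :
    -- (a) generalized Bellman recursion on the history-augmented state space
    (∀ (h : List (S × A)) (s : S) (a : A) (π : P),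
        aggValue γ γagg w0 V h s (act a π) =
          (∑ i, histWeight γ γagg w0 i h * R i s a) +
            γagg s a *
              ∑ s', T s a s' * aggValue γ γagg w0 V (h ++ [(s, a)]) s' π) ∧
    -- (b) dynamic consistency
    (∀ (h : List (S × A)) (s : S) (a : A) (π ω : P),
        aggValue γ γagg w0 V h s (act a π) > aggValue γ γagg w0 V h s (act a ω) ↔
          (∑ s', T s a s' * aggValue γ γagg w0 V (h ++ [(s, a)]) s' π) >
            (∑ s', T s a s' * aggValue γ γagg w0 V (h ++ [(s, a)]) s' ω)) ∧
    -- (c) Pareto indifference at every history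
    (∀ (h : List (S × A)) (s : S) (π ω : P),
        (∀ i, V i s π = V i s ω) →
          aggValue γ γagg w0 V h s π = aggValue γ γagg w0 V h s ω) := by
  refine ⟨fun h s a π => aggValue_act hB h (hγaggpos s a).ne' π,
    fun h s a π ω => aggValue_act_lt_act_iff hB h (hγaggpos s a) π ω,
    fun h s π ω hV => aggValue_eq_of_forall_eq h hV⟩

/-- **Possibility of non-Markovian aggregation (Theorem 5).** With history-discounted
weights `w_i(h ++ [(s,a)]) = w_i(h)·γ_i(s,a)/γagg(s,a)`, the aggregate
`Vagg(h,s,π) = Σ_i w_i(h)·V_i(s,π)` (a) satisfies a generalized Bellman recursion on the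
history-augmented state space with discount `γagg` and reward `Σ_i w_i(h)·R_i(s,a)`,
(b) is dynamically consistent, and (c) is Pareto indifferent at every history. -/
theorem possibility_of_nonmarkovian_aggregation
    {S A P I : Type*} [Fintype S] [Nonempty S] [Fintype A] [Nonempty A] [Fintype I]
    (T : S → A → S → ℝ)
    (hT0 : ∀ s a s', 0 ≤ T s a s') (hT1 : ∀ s a, ∑ s', T s a s' = 1)
    (act : A → P → P) (mix : ℝ → P → P → P)
    (hact_mix : ∀ (a : A) (β : ℝ) (π ω : P), act a (mix β π ω) = mix β (act a π) (act a ω))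
    (V : I → S → P → ℝ) (haff : ∀ i, MixAffine mix (V i))
    (R : I → S → A → ℝ) (γ : I → S → A → ℝ)
    (hB : ∀ i, BellmanForm T act (V i) (R i) (γ i))
    (γagg : S → A → ℝ) (hγaggpos : ∀ s a, 0 < γagg s a)
    (w0 : I → ℝ) :
    -- (a) generalized Bellman recursion on the history-augmented state space
    (∀ (h : List (S × A)) (s : S) (a : A) (π : P),
        aggValue γ γagg w0 V h s (act a π) =
          (∑ i, histWeight γ γagg w0 i h * R i s a) +
            γagg s a *
              ∑ s', T s a s' * aggValue γ γagg w0 V (h ++ [(s, a)]) s' π) ∧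
    -- (b) dynamic consistency
    (∀ (h : List (S × A)) (s : S) (a : A) (π ω : P),
        aggValue γ γagg w0 V h s (act a π) > aggValue γ γagg w0 V h s (act a ω) ↔
          (∑ s', T s a s' * aggValue γ γagg w0 V (h ++ [(s, a)]) s' π) >
            (∑ s', T s a s' * aggValue γ γagg w0 V (h ++ [(s, a)]) s' ω)) ∧
    -- (c) Pareto indifference at every history
    (∀ (h : List (S × A)) (s : S) (π ω : P),
        (∀ i, V i s π = V i s ω) →
          aggValue γ γagg w0 V h s π = aggValue γ γagg w0 V h s ω) :=
  possibility_of_nonmarkovian_aggregation_general T act V R γ hB γagg hγaggpos w0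
end

section
/- Let S, A, T, 𝒫 be as in the MDP context, I a finite index set, and for each i ∈ I let V_i : S × 𝒫 → ℝ satisfy the generalized Bellman form with reward R_i and a common discount γ : S × A → ℝ (the same γ for all i). Let c ∈ ℝ and w : I → ℝ, and define V_Σ(s, Π) := c + Σ_{i∈I} w_i·V_i(s, Π). Then V_Σ satisfies the generalized Bellman form with the same discount γ and reward R_Σ(s,a) := c·(1 − γ(s,a)) + Σ_{i∈I} w_i·R_i(s,a); that is, when all objectives share the same time preference, Markovian (linear scalarized) aggregation is possible. -/
open scoped BigOperators

open Finset

section Vbar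

variable {S A P : Type*} [Fintype S] (T : S → A → S → ℝ)

theorem Vbar_const (hT1 : ∀ s a, ∑ s', T s a s' = 1) (c : ℝ) (s : S) (a : A) (π : P) :
    Vbar T (fun _ _ => c) s a π = c := by
  simp only [Vbar, ← sum_mul, hT1, one_mul]

theorem Vbar_add (V₁ V₂ : S → P → ℝ) (s : S) (a : A) (π : P) :
    Vbar T (fun s π => V₁ s π + V₂ s π) s a π = Vbar T V₁ s a π + Vbar T V₂ s a π := by
  simp only [Vbar, mul_add, sum_add_distrib]

theorem Vbar_const_mul (k : ℝ) (V : S → P → ℝ) (s : S) (a : A) (π : P) :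
    Vbar T (fun s π => k * V s π) s a π = k * Vbar T V s a π := by
  simp only [Vbar, mul_sum, mul_left_comm]

theorem Vbar_sum {I : Type*} (t : Finset I) (V : I → S → P → ℝ) (s : S) (a : A) (π : P) :
    Vbar T (fun s π => ∑ i ∈ t, V i s π) s a π = ∑ i ∈ t, Vbar T (V i) s a π := by
  simp only [Vbar, mul_sum]
  exact sum_comm

end Vbar

namespace BellmanForm

variable {S A P : Type*} [Fintype S] {T : S → A → S → ℝ} {act : A → P → P} {γ : S → A → ℝ}

theorem const (hT1 : ∀ s a, ∑ s', T s a s' = 1) (c : ℝ) :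
    BellmanForm T act (fun _ _ => c) (fun s a => c * (1 - γ s a)) γ := by
  intro s a π
  rw [Vbar_const T hT1]
  ring

theorem add {V₁ V₂ : S → P → ℝ} {R₁ R₂ : S → A → ℝ}
    (h₁ : BellmanForm T act V₁ R₁ γ) (h₂ : BellmanForm T act V₂ R₂ γ) :
    BellmanForm T act (fun s π => V₁ s π + V₂ s π) (fun s a => R₁ s a + R₂ s a) γ := by
  intro s a π
  beta_reduce
  rw [Vbar_add, h₁, h₂]
  ring

theorem const_mul {V : S → P → ℝ} {R : S → A → ℝ} (h : BellmanForm T act V R γ) (k : ℝ) :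
    BellmanForm T act (fun s π => k * V s π) (fun s a => k * R s a) γ := by
  intro s a π
  beta_reduce
  rw [Vbar_const_mul, h]
  ring

theorem sum {I : Type*} (t : Finset I) {V : I → S → P → ℝ} {R : I → S → A → ℝ}
    (h : ∀ i ∈ t, BellmanForm T act (V i) (R i) γ) :
    BellmanForm T act (fun s π => ∑ i ∈ t, V i s π) (fun s a => ∑ i ∈ t, R i s a) γ := by
  intro s a π
  rw [Vbar_sum, mul_sum, ← sum_add_distrib]
  exact sum_congr rfl fun i hi => h i hi s a π

end BellmanForm

theorem markovian_aggregation_common_discount_general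
    {S A P I : Type*} [Fintype S] [Fintype I]
    (T : S → A → S → ℝ)
    (hT1 : ∀ s a, ∑ s', T s a s' = 1)
    (act : A → P → P)
    (V : I → S → P → ℝ) (R : I → S → A → ℝ) (γ : S → A → ℝ)
    (hB : ∀ i, BellmanForm T act (V i) (R i) γ)
    (c : ℝ) (w : I → ℝ) :
    BellmanForm T act (fun s π => c + ∑ i, w i * V i s π)
      (fun s a => c * (1 - γ s a) + ∑ i, w i * R i s a) γ :=
  (BellmanForm.const hT1 c).add (BellmanForm.sum univ fun i _ => (hB i).const_mul (w i))

/-- **Markovian aggregation under a common discount.** If all individual value functions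
satisfy the generalized Bellman form with the same discount `γ`, then any linear
scalarization `Vagg = c + Σ_i w_i·V_i` satisfies the generalized Bellman form with the
same discount `γ` and reward `Ragg(s,a) = c·(1 − γ(s,a)) + Σ_i w_i·R_i(s,a)`. -/
theorem markovian_aggregation_common_discount
    {S A P I : Type*} [Fintype S] [Nonempty S] [Fintype A] [Nonempty A] [Fintype I]
    (T : S → A → S → ℝ)
    (hT0 : ∀ s a s', 0 ≤ T s a s') (hT1 : ∀ s a, ∑ s', T s a s' = 1)
    (act : A → P → P) (mix : ℝ → P → P → P)
    (hact_mix : ∀ (a : A) (β : ℝ) (π ω : P), act a (mix β π ω) = mix β (act a π) (act a ω))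
    (V : I → S → P → ℝ) (R : I → S → A → ℝ) (γ : S → A → ℝ)
    (hB : ∀ i, BellmanForm T act (V i) (R i) γ)
    (c : ℝ) (w : I → ℝ) :
    BellmanForm T act (fun s π => c + ∑ i, w i * V i s π)
      (fun s a => c * (1 - γ s a) + ∑ i, w i * R i s a) γ :=
  markovian_aggregation_common_discount_general T hT1 act V R γ hB c w
end

section
/- For every x : ℕ → Bool, V(x) ≤ 16/5; moreover V(x) = 16/5 if and only if x(t) = true exactly when t = 0 (i.e., play at time 0 and work at every time t ≥ 1 is the unique maximizer of V). -/
open scoped BigOperators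

/-- Reward at time `t` in the Procrastinator's Peril: playing (`true`) yields
`(1/2)^(t+1)` and working (`false`) yields `(3/10)·(9/10)^t`. -/
noncomputable def ppReward (t : ℕ) (b : Bool) : ℝ :=
  if b then (1 / 2 : ℝ) ^ (t + 1) else (3 / 10 : ℝ) * (9 / 10 : ℝ) ^ t

/-- Total value of a trajectory `x : ℕ → Bool` in the Procrastinator's Peril. -/
noncomputable def ppValue (x : ℕ → Bool) : ℝ :=
  ∑' t, ppReward t (x t)

lemma pp_nonneg (t : ℕ) (b : Bool) : 0 ≤ ppReward t b := by
  cases b <;> simp [ppReward] <;> positivity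

lemma pp_play_lt (t : ℕ) (ht : 1 ≤ t) :
    (1/2:ℝ)^(t+1) < (3/10) * (9/10)^t := by
  induction t with
  | zero => omega
  | succ n ih =>
    rcases Nat.lt_or_ge 1 (n+1) with h | h
    · have hn : 1 ≤ n := by omega
      have h1 := ih hn
      have h2 : (0:ℝ) < (9/10)^n := by positivity
      calc (1/2:ℝ)^(n+1+1) = (1/2) * (1/2)^(n+1) := by ring
        _ < (1/2) * ((3/10) * (9/10)^n) := by nlinarith [pow_pos (by norm_num : (0:ℝ) < 1/2) (n+1)]
        _ ≤ (9/10) * ((3/10) * (9/10)^n) := by nlinarith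
        _ = (3/10) * (9/10)^(n+1) := by ring
    · have : n = 0 := by omega
      subst this; norm_num

lemma pp_le (t : ℕ) (b : Bool) : ppReward t b ≤ ppReward t (decide (t = 0)) := by
  rcases Nat.eq_zero_or_pos t with h | h
  · subst h; cases b <;> simp [ppReward] <;> norm_num
  · have : decide (t = 0) = false := by simp; omega
    rw [this]
    cases b
    · simp [ppReward]
    · simpa [ppReward] using (pp_play_lt t h).le

lemma pp_lt (t : ℕ) (b : Bool) (hb : b ≠ decide (t = 0)) :
    ppReward t b < ppReward t (decide (t = 0)) := by
  rcases Nat.eq_zero_or_pos t with h | h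
  · subst h
    have : b = false := by simpa using hb
    subst this; simp [ppReward]; norm_num
  · have hd : decide (t = 0) = false := by simp; omega
    rw [hd]
    have : b = true := by rcases b with _ | _ <;> simp_all
    subst this
    simpa [ppReward] using pp_play_lt t h

lemma pp_summable (x : ℕ → Bool) : Summable (fun t => ppReward t (x t)) := by
  have hgeo : Summable (fun t : ℕ => (9/10:ℝ)^t) :=
    summable_geometric_of_lt_one (by norm_num) (by norm_num)
  have hle : ∀ t, ppReward t (x t) ≤ (9/10:ℝ)^t := ?_
  · exact Summable.of_nonneg_of_le (fun t => pp_nonneg t (x t)) hle hgeo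
  · intro t
    have hg : (0:ℝ) < (9/10)^t := by positivity
    show ppReward t (x t) ≤ (9/10:ℝ)^t
    cases h : x t
    · simp only [ppReward, Bool.false_eq_true, if_false]
      nlinarith
    · simp only [ppReward, if_true]
      calc (1/2:ℝ)^(t+1) ≤ (1/2:ℝ)^t := by
            apply pow_le_pow_of_le_one <;> norm_num
        _ ≤ (9/10:ℝ)^t := by
            apply pow_le_pow_left₀ <;> norm_num

lemma pp_opt_val : ppValue (fun t => decide (t = 0)) = 16/5 := by
  have hs := pp_summable (fun t => decide (t = 0))
  rw [ppValue, Summable.tsum_eq_zero_add hs]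
  have h1 : (fun n : ℕ => ppReward (n+1) (decide (n+1 = 0)))
      = fun n : ℕ => (27/100:ℝ) * (9/10)^n := by
    funext n; simp [ppReward]; ring
  rw [h1, tsum_mul_left, tsum_geometric_of_lt_one (by norm_num) (by norm_num)]
  simp [ppReward]
  norm_num

/-- **The Procrastinator's Peril: optimal value.** Every trajectory has value at most
`16/5`, with equality exactly for the trajectory that plays at time `0` and works at
every time `t ≥ 1`. -/
theorem ppValue_le_and_eq_iff (x : ℕ → Bool) :
    ppValue x ≤ 16 / 5 ∧ (ppValue x = 16 / 5 ↔ ∀ t, (x t = true ↔ t = 0)) := by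
  have hs := pp_summable x
  have hso := pp_summable (fun t => decide (t = 0))
  have hle : ppValue x ≤ ppValue (fun t => decide (t = 0)) :=
    Summable.tsum_le_tsum (fun t => pp_le t (x t)) hs hso
  rw [pp_opt_val] at hle
  refine ⟨hle, ?_, ?_⟩
  · intro heq t
    by_contra hc
    have hne : x t ≠ decide (t = 0) := by
      intro h
      apply hc
      rw [h]
      simp
    have hlt : ppValue x < ppValue (fun t => decide (t = 0)) :=
      Summable.tsum_lt_tsum_of_nonneg (fun b => pp_nonneg b (x b))
        (fun b => pp_le b (x b)) (pp_lt t (x t) hne) hso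
    rw [pp_opt_val, heq] at hlt
    exact lt_irrefl _ hlt
  · intro h
    have hx : x = fun t => decide (t = 0) := by
      funext t
      have := h t
      cases hxt : x t <;> simp_all
    rw [ppValue, hx, ← ppValue, pp_opt_val]
end

section
/- The constant trajectories satisfy V(λt. true) = 1 and V(λt. false) = 3, and the unique maximizer x* of V satisfies x*(0) = true. Consequently, since the optimization problem faced at every time step is identical to the one at time 0, an agent that at each step executes the first action of the currently optimal plan plays at every step, realizing the trajectory λt. true with value V(λt. true) = 1, which is strictly less than V(λt. false) = 3, which in turn is strictly less than the optimal value 16/5. -/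
open scoped BigOperators

/-!
Both rewards are summable in `t`, so the value is maximised by choosing the better action
separately at every time. Playing is better only at `t = 0` (`1/2 > 3/10`); from `t = 1` on,
`(1/2)^(t+1) < (3/10)·(9/10)^t`. So the unique maximizer plays once and then works forever,
and a greedy agent, facing the same problem at every step, plays forever.
-/

section PointwiseMaximizer

variable {ι β : Type*} {r : ι → β → ℝ} {xstar : ι → β}

theorem tsum_le_tsum_iff_eq_of_strict_pointwise_max
    (hsum : ∀ x : ι → β, Summable fun i => r i (x i))
    (hmax : ∀ i b, b ≠ xstar i → r i b < r i (xstar i)) (y : ι → β) :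
    (∀ x : ι → β, ∑' i, r i (x i) ≤ ∑' i, r i (y i)) ↔ y = xstar := by
  have hle : ∀ i b, r i b ≤ r i (xstar i) := fun i b => by
    by_cases hb : b = xstar i
    · rw [hb]
    · exact (hmax i b hb).le
  constructor
  · intro hy
    by_contra hne
    obtain ⟨i, hi⟩ := Function.ne_iff.mp hne
    have hlt : ∑' i, r i (y i) < ∑' i, r i (xstar i) :=
      Summable.tsum_lt_tsum (fun j => hle j (y j)) (hmax i (y i) hi) (hsum y) (hsum xstar)
    exact (hy xstar).not_gt hlt
  · rintro rfl x
    exact Summable.tsum_le_tsum (fun i => hle i (x i)) (hsum x) (hsum y)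

end PointwiseMaximizer

lemma ppReward_le_geometric (t : ℕ) (b : Bool) : ppReward t b ≤ (9 / 10 : ℝ) ^ t := by
  cases b
  · simp only [ppReward, Bool.false_eq_true, if_false]
    nlinarith [pow_nonneg (by norm_num : (0 : ℝ) ≤ 9 / 10) t]
  · calc ppReward t true = (1 / 2 : ℝ) ^ (t + 1) := if_pos rfl
      _ ≤ (1 / 2 : ℝ) ^ t := pow_le_pow_of_le_one (by norm_num) (by norm_num) (Nat.le_succ t)
      _ ≤ (9 / 10 : ℝ) ^ t := pow_le_pow_left₀ (by norm_num) (by norm_num) t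

lemma ppReward_summable (x : ℕ → Bool) : Summable fun t => ppReward t (x t) :=
  Summable.of_nonneg_of_le (fun t => by unfold ppReward; split <;> positivity)
    (fun t => ppReward_le_geometric t (x t))
    (summable_geometric_of_lt_one (by norm_num) (by norm_num))

lemma ppReward_zero_false_lt_true : ppReward 0 false < ppReward 0 true := by
  norm_num [ppReward]

lemma ppReward_succ_true_lt_false (n : ℕ) : ppReward (n + 1) true < ppReward (n + 1) false := by
  have hpow : (1 / 2 : ℝ) ^ n ≤ (9 / 10 : ℝ) ^ n := pow_le_pow_left₀ (by norm_num) (by norm_num) n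
  have hpos : (0 : ℝ) < (9 / 10 : ℝ) ^ n := by positivity
  simp only [ppReward, if_true, Bool.false_eq_true, if_false]
  calc (1 / 2 : ℝ) ^ (n + 1 + 1) = 1 / 4 * (1 / 2 : ℝ) ^ n := by ring
    _ ≤ 1 / 4 * (9 / 10 : ℝ) ^ n := by gcongr
    _ < 27 / 100 * (9 / 10 : ℝ) ^ n := mul_lt_mul_of_pos_right (by norm_num) hpos
    _ = 3 / 10 * (9 / 10 : ℝ) ^ (n + 1) := by ring

def ppOptimalPlan (t : ℕ) : Bool := t == 0

lemma ppReward_lt_optimalPlan (t : ℕ) (b : Bool) (hb : b ≠ ppOptimalPlan t) :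
    ppReward t b < ppReward t (ppOptimalPlan t) := by
  cases t with
  | zero =>
    obtain rfl : b = false := by simpa [ppOptimalPlan] using hb
    exact ppReward_zero_false_lt_true
  | succ n =>
    obtain rfl : b = true := by simpa [ppOptimalPlan] using hb
    exact ppReward_succ_true_lt_false n

lemma ppValue_maximal_iff (y : ℕ → Bool) :
    (∀ x, ppValue x ≤ ppValue y) ↔ y = ppOptimalPlan :=
  tsum_le_tsum_iff_eq_of_strict_pointwise_max ppReward_summable ppReward_lt_optimalPlan y

lemma ppValue_const_true : ppValue (fun _ => true) = 1 := by
  simp only [ppValue, ppReward, if_true, pow_succ]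
  rw [tsum_mul_right, tsum_geometric_of_lt_one (by norm_num) (by norm_num)]
  norm_num

lemma ppValue_const_false : ppValue (fun _ => false) = 3 := by
  simp only [ppValue, ppReward, Bool.false_eq_true, if_false]
  rw [tsum_mul_left, tsum_geometric_of_lt_one (by norm_num) (by norm_num)]
  norm_num

/-- **The Procrastinator's Peril: perpetual procrastination.** Always playing has value
`1`, always working has value `3`, there is a unique maximizer of the value, the
(unique) maximizer plays at time `0`; consequently the greedy agent — who at each of
the identical decision problems executes the first action of the currently optimal
plan — plays forever, realizing value `1`, which is strictly less than the value `3`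
of always working, itself strictly less than the optimal value `16/5`. -/
theorem procrastinators_peril :
    ppValue (fun _ => true) = 1 ∧
    ppValue (fun _ => false) = 3 ∧
    (∃! xstar : ℕ → Bool, ∀ x, ppValue x ≤ ppValue xstar) ∧
    (∀ xstar : ℕ → Bool, (∀ x, ppValue x ≤ ppValue xstar) → xstar 0 = true) ∧
    ppValue (fun _ => true) < ppValue (fun _ => false) ∧
    ppValue (fun _ => false) < 16 / 5 := by
  refine ⟨ppValue_const_true, ppValue_const_false,
    ⟨ppOptimalPlan, (ppValue_maximal_iff _).mpr rfl, fun y hy => (ppValue_maximal_iff y).mp hy⟩,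
    fun y hy => ?_, ?_, ?_⟩
  · rw [(ppValue_maximal_iff y).mp hy]
    rfl
  · rw [ppValue_const_true, ppValue_const_false]
    norm_num
  · rw [ppValue_const_false]
    norm_num
end
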